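/- arXiv:2207.05410 — 5 statements merged into one kernel-verified Lean document; each statement's English description precedes it below -/
import Mathlib

section
/- Let φ : ℝ → ℝ be smooth with support in [T₀, ∞), T₀ ≥ 1, and equal to 1 on a neighborhood of +∞ (i.e. φ(t) = 1 for t ≥ T₁ for some T₁). Then f(s) := ∫ φ(t) t^{-s} dt, holomorphic for Re(s) > 1, extends meromorphically to ℂ with a single simple pole at s = 1 of residue 1, and satisfies the functional identity f(s) = g(s−1)/(s−1) for all s ≠ 1, where g(s) := ∫ φ'(t) t^{-s} dt is an entire function. -/
open MeasureTheory Complex Filter Set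

/-- For smooth `φ` supported in `[T₀, ∞)`, `T₀ ≥ 1`, with `φ = 1` on `[T₁, ∞)`,
the function `f(s) = ∫₀^∞ φ(t) t^{-s} dt` (holomorphic for `Re s > 1`) continues
meromorphically to `ℂ` with a single simple pole at `s = 1` of residue `1`, via the identity
`f(s) = g(s-1)/(s-1)` where `g(s) = ∫₀^∞ φ'(t) t^{-s} dt` is entire and `g(0) = 1`. -/
theorem stmt2 (φ : ℝ → ℝ) (T₀ T₁ : ℝ) (hT₀ : 1 ≤ T₀)
    (hφ : ContDiff ℝ (⊤ : ℕ∞) φ) (hsupp : Function.support φ ⊆ Set.Ici T₀)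
    (hone : ∀ t ≥ T₁, φ t = 1) :
    Differentiable ℂ
      (fun s : ℂ => ∫ t in Set.Ioi (0 : ℝ), ((deriv φ t : ℝ) : ℂ) * (t : ℂ) ^ (-s)) ∧
    (∫ t in Set.Ioi (0 : ℝ), ((deriv φ t : ℝ) : ℂ) * (t : ℂ) ^ (-(0 : ℂ))) = 1 ∧
    ∀ s : ℂ, 1 < s.re →
      (∫ t in Set.Ioi (0 : ℝ), (φ t : ℂ) * (t : ℂ) ^ (-s)) =
        (∫ t in Set.Ioi (0 : ℝ), ((deriv φ t : ℝ) : ℂ) * (t : ℂ) ^ (-(s - 1))) / (s - 1) := by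
  have hT₀0 : (0:ℝ) < T₀ := lt_of_lt_of_le one_pos hT₀
  set M : ℝ := max T₁ T₀ with hM
  have hT₀M : T₀ ≤ M := le_max_right _ _
  have hT₁M : T₁ ≤ M := le_max_left _ _
  have hφ0 : ∀ t < T₀, φ t = 0 := by
    intro t ht
    by_contra h
    exact absurd (hsupp h) (not_le.2 ht)
  have hψcont : Continuous (deriv φ) := hφ.continuous_deriv (by simp)
  have hψ0 : ∀ t < T₀, deriv φ t = 0 := by
    intro t ht
    have h : φ =ᶠ[nhds t] fun _ => (0:ℝ) := by
      filter_upwards [Iio_mem_nhds ht] with x hx using hφ0 x hx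
    rw [h.deriv_eq, deriv_const]
  have hψ1 : ∀ t > T₁, deriv φ t = 0 := by
    intro t ht
    have h : φ =ᶠ[nhds t] fun _ => (1:ℝ) := by
      filter_upwards [Ioi_mem_nhds ht] with x hx using hone x hx.le
    rw [h.deriv_eq, deriv_const]
  have hψsupp : Function.support (deriv φ) ⊆ Icc T₀ M := by
    intro t ht
    by_contra h
    rcases not_and_or.1 h with h1 | h2
    · exact ht (hψ0 t (not_le.1 h1))
    · exact ht (hψ1 t (lt_of_le_of_lt hT₁M (not_le.1 h2)))
  -- continuity of the complex integrands
  have hcontC : ∀ z : ℂ, ContinuousOn (fun t : ℝ => ((deriv φ t : ℝ) : ℂ) * (t : ℂ) ^ z)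
      {x : ℝ | x ≠ 0} := by
    intro z
    refine (Complex.continuous_ofReal.comp hψcont).continuousOn.mul ?_
    intro x hx
    exact (Complex.continuousAt_ofReal_cpow_const x z (Or.inr hx)).continuousWithinAt
  -- integrability of ψ t * t^z on Ioi 0 for all z
  have hInt : ∀ z : ℂ, IntegrableOn (fun t : ℝ => ((deriv φ t : ℝ) : ℂ) * (t : ℂ) ^ z)
      (Ioi (0:ℝ)) := by
    intro z
    have hsub : Function.support (fun t : ℝ => ((deriv φ t : ℝ) : ℂ) * (t : ℂ) ^ z)
        ⊆ Icc T₀ M := by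
      intro t ht
      refine hψsupp ?_
      intro h0
      apply ht
      simp [h0]
    have h1 : IntegrableOn (fun t : ℝ => ((deriv φ t : ℝ) : ℂ) * (t : ℂ) ^ z) (Icc T₀ M) := by
      refine ContinuousOn.integrableOn_compact isCompact_Icc ?_
      refine (hcontC z).mono ?_
      intro x hx
      exact ne_of_gt (lt_of_lt_of_le hT₀0 hx.1)
    exact ((integrableOn_iff_integrable_of_support_subset hsub).mp h1).integrableOn
  refine ⟨?_, ?_, ?_⟩
  · -- entire
    intro s
    have key : (fun s : ℂ => ∫ t in Set.Ioi (0 : ℝ), ((deriv φ t : ℝ) : ℂ) * (t : ℂ) ^ (-s))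
        = fun s : ℂ => mellin (fun t : ℝ => ((deriv φ t : ℝ) : ℂ)) (1 - s) := by
      funext z
      rw [mellin]
      congr 1
      funext t
      rw [show (1:ℂ) - z - 1 = -z by ring, smul_eq_mul, mul_comm]
    rw [key]
    have hfc : LocallyIntegrableOn (fun t : ℝ => ((deriv φ t : ℝ) : ℂ)) (Ioi 0) :=
      ((Complex.continuous_ofReal.comp hψcont).locallyIntegrable).locallyIntegrableOn _
    have hzero_top : (fun t : ℝ => ((deriv φ t : ℝ) : ℂ)) =ᶠ[atTop] fun _ => (0:ℂ) := by
      filter_upwards [eventually_gt_atTop M] with t ht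
      simp [hψ1 t (lt_of_le_of_lt hT₁M ht)]
    have hzero_bot : (fun t : ℝ => ((deriv φ t : ℝ) : ℂ)) =ᶠ[nhdsWithin 0 (Ioi 0)]
        fun _ => (0:ℂ) := by
      filter_upwards [mem_nhdsWithin_of_mem_nhds (Iio_mem_nhds hT₀0)] with t ht
      simp [hψ0 t ht]
    set a : ℝ := (1 - s).re + 1
    set b : ℝ := (1 - s).re - 1
    have hf_top : (fun t : ℝ => ((deriv φ t : ℝ) : ℂ)) =O[atTop] (· ^ (-a)) := by
      rw [Asymptotics.isBigO_iff]
      refine ⟨0, ?_⟩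
      filter_upwards [hzero_top] with t ht
      simp [ht]
    have hf_bot : (fun t : ℝ => ((deriv φ t : ℝ) : ℂ)) =O[nhdsWithin 0 (Ioi 0)] (· ^ (-b)) := by
      rw [Asymptotics.isBigO_iff]
      refine ⟨0, ?_⟩
      filter_upwards [hzero_bot] with t ht
      simp [ht]
    have hmain : DifferentiableAt ℂ (mellin (fun t : ℝ => ((deriv φ t : ℝ) : ℂ))) (1 - s) :=
      mellin_differentiableAt_of_isBigO_rpow hfc hf_top (by simp [a]) hf_bot (by simp [b])
    exact DifferentiableAt.comp (g := mellin fun t : ℝ => ((deriv φ t : ℝ) : ℂ))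
      (f := fun z : ℂ => 1 - z) s hmain ((differentiable_const (1:ℂ)).sub differentiable_fun_id s)
  · -- g 0 = 1
    have h1 : (∫ t in Set.Ioi (0 : ℝ), ((deriv φ t : ℝ) : ℂ) * (t : ℂ) ^ (-(0 : ℂ)))
        = ∫ t in Set.Ioi (0 : ℝ), ((deriv φ t : ℝ) : ℂ) := by
      simp
    have h2 : (∫ t in Set.Ioi (0 : ℝ), deriv φ t) = ∫ t, deriv φ t := by
      refine setIntegral_eq_integral_of_forall_compl_eq_zero ?_
      intro t ht
      exact hψ0 t (lt_of_le_of_lt (not_lt.1 ht) hT₀0)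
    have h3 : (∫ t, deriv φ t) = ∫ t in Set.Ioc (T₀ - 1) (M + 1), deriv φ t := by
      refine (setIntegral_eq_integral_of_forall_compl_eq_zero ?_).symm
      intro t ht
      rcases not_and_or.1 ht with h | h
      · exact hψ0 t (by linarith [not_lt.1 h])
      · exact hψ1 t (by linarith [not_le.1 h, hT₁M])
    have hab : T₀ - 1 ≤ M + 1 := by linarith
    have h4 : (∫ t in Set.Ioc (T₀ - 1) (M + 1), deriv φ t)
        = ∫ t in (T₀ - 1)..(M + 1), deriv φ t := (intervalIntegral.integral_of_le hab).symm
    have h5 : (∫ t in (T₀ - 1)..(M + 1), deriv φ t) = φ (M + 1) - φ (T₀ - 1) := by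
      refine intervalIntegral.integral_deriv_eq_sub (fun x _ => (hφ.differentiable (by simp)) x) ?_
      exact (hψcont.intervalIntegrable _ _)
    have hval : (∫ t in Set.Ioi (0 : ℝ), deriv φ t) = 1 := by
      rw [h2, h3, h4, h5, hone (M + 1) (by linarith), hφ0 (T₀ - 1) (by linarith)]
      norm_num
    rw [h1]
    calc (∫ t in Set.Ioi (0 : ℝ), ((deriv φ t : ℝ) : ℂ))
        = ((∫ t in Set.Ioi (0 : ℝ), deriv φ t : ℝ) : ℂ) := integral_ofReal
      _ = 1 := by rw [hval]; norm_num
  · -- functional equation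
    intro s hs
    have hsne1 : s ≠ 1 := by
      intro h
      rw [h] at hs
      norm_num at hs
    have hs1 : (1:ℂ) - s ≠ 0 := sub_ne_zero.mpr (Ne.symm hsne1)
    have hsne : -s ≠ -1 := fun h => hsne1 (neg_injective h)
    -- the antiderivative
    set F : ℝ → ℂ := fun t => (φ t : ℂ) * ((t:ℂ) ^ ((1:ℂ) - s) / (1 - s)) with hF
    set G1 : ℝ → ℂ := fun t => ((deriv φ t : ℝ) : ℂ) * ((t:ℂ) ^ ((1:ℂ) - s) / (1 - s)) with hG1
    set G2 : ℝ → ℂ := fun t => (φ t : ℂ) * (t:ℂ) ^ (-s) with hG2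
    have hderiv : ∀ x ∈ Ioi (0:ℝ), HasDerivAt F (G1 x + G2 x) x := by
      intro x hx
      have hx0 : x ≠ 0 := ne_of_gt hx
      have h1 : HasDerivAt (fun t : ℝ => ((φ t : ℝ) : ℂ)) ((deriv φ x : ℝ) : ℂ) x :=
        ((hφ.differentiable (by simp) x).hasDerivAt).ofReal_comp
      have h2 : HasDerivAt (fun t : ℝ => (t:ℂ) ^ ((1:ℂ) - s) / (1 - s)) ((x:ℂ) ^ (-s)) x := by
        have := hasDerivAt_ofReal_cpow_const' hx0 hsne
        simpa [show -s + 1 = 1 - s by ring] using this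
      simpa [hG1, hG2] using h1.fun_mul h2
    -- integrability of G1
    have hG1int : IntegrableOn G1 (Ioi (0:ℝ)) := by
      have h2 : IntegrableOn (fun x : ℝ => ((deriv φ x : ℝ) : ℂ) * (x:ℂ) ^ ((1:ℂ) - s) / (1 - s))
          (Ioi (0:ℝ)) := (hInt (1 - s)).div_const (1 - s)
      refine IntegrableOn.congr_fun h2 (fun t _ => ?_) measurableSet_Ioi
      simp [hG1, mul_div_assoc]
    -- bound on φ
    obtain ⟨C, hC⟩ : ∃ C : ℝ, ∀ t ∈ Icc T₀ M, |φ t| ≤ C := by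
      obtain ⟨C, hC⟩ := (isCompact_Icc (a := T₀) (b := M)).exists_bound_of_continuousOn
        hφ.continuous.continuousOn
      exact ⟨C, fun t ht => by simpa [Real.norm_eq_abs] using hC t ht⟩
    have hφbd : ∀ t : ℝ, |φ t| ≤ max C 1 := by
      intro t
      rcases lt_or_ge t T₀ with h | h
      · rw [hφ0 t h, abs_zero]
        exact le_max_of_le_right zero_le_one
      rcases le_or_gt t M with h2 | h2
      · exact le_trans (hC t ⟨h, h2⟩) (le_max_left _ _)
      · rw [hone t (by linarith [hT₁M]), abs_one]
        exact le_max_right _ _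
    -- integrability of G2
    have hG2int : IntegrableOn G2 (Ioi (0:ℝ)) := by
      have hsub : Function.support G2 ⊆ Ici T₀ := by
        intro t ht
        by_contra h
        exact ht (by simp [hG2, hφ0 t (not_le.1 h)])
      have hIci : IntegrableOn G2 (Ici T₀) := by
        rw [integrableOn_Ici_iff_integrableOn_Ioi]
        have hbound : IntegrableOn (fun t : ℝ => max C 1 * t ^ (-s.re)) (Ioi T₀) :=
          (integrableOn_Ioi_rpow_of_lt (by linarith) hT₀0).const_mul _
        refine Integrable.mono' hbound ?_ ?_
        · refine ContinuousOn.aestronglyMeasurable ?_ measurableSet_Ioi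
          refine ((Complex.continuous_ofReal.comp hφ.continuous).continuousOn).mul ?_
          intro x hx
          exact (Complex.continuousAt_ofReal_cpow_const x (-s)
            (Or.inr (ne_of_gt (lt_trans hT₀0 hx)))).continuousWithinAt
        · filter_upwards [ae_restrict_mem measurableSet_Ioi] with t ht
          have ht0 : (0:ℝ) < t := lt_trans hT₀0 ht
          have : ‖G2 t‖ = |φ t| * t ^ (-s).re := by
            rw [hG2, norm_mul]
            simp only [Complex.norm_real, Real.norm_eq_abs]
            rw [Complex.norm_cpow_eq_rpow_re_of_pos ht0]
          rw [this]
          simp only [Complex.neg_re]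
          exact mul_le_mul_of_nonneg_right (hφbd t) (Real.rpow_nonneg ht0.le _)
      exact (((integrableOn_iff_integrable_of_support_subset hsub).mp hIci)).integrableOn
    -- continuity at 0
    have hcont0 : ContinuousWithinAt F (Ici (0:ℝ)) 0 := by
      have hev : F =ᶠ[nhds (0:ℝ)] fun _ => (0:ℂ) := by
        filter_upwards [Iio_mem_nhds hT₀0] with t ht
        simp [hF, hφ0 t ht]
      exact ((continuousAt_congr hev).mpr continuousAt_const).continuousWithinAt
    -- tendsto 0 at top
    have htend : Tendsto F atTop (nhds (0:ℂ)) := by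
      have hev : F =ᶠ[atTop] fun t : ℝ => (t:ℂ) ^ ((1:ℂ) - s) / (1 - s) := by
        filter_upwards [eventually_ge_atTop T₁] with t ht
        simp [hF, hone t ht]
      rw [tendsto_congr' hev]
      have h0 : Tendsto (fun t : ℝ => (t:ℂ) ^ ((1:ℂ) - s)) atTop (nhds 0) := by
        rw [tendsto_zero_iff_norm_tendsto_zero]
        have hev2 : (fun t : ℝ => ‖(t:ℂ) ^ ((1:ℂ) - s)‖) =ᶠ[atTop]
            fun t : ℝ => t ^ (1 - s.re) := by
          filter_upwards [eventually_gt_atTop (0:ℝ)] with t ht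
          rw [Complex.norm_cpow_eq_rpow_re_of_pos ht]
          norm_num
        rw [tendsto_congr' hev2]
        have := tendsto_rpow_neg_atTop (y := s.re - 1) (by linarith)
        simpa [neg_sub] using this
      simpa using h0.div_const (1 - s)
    have key := integral_Ioi_of_hasDerivAt_of_tendsto hcont0 hderiv (hG1int.add hG2int) htend
    rw [integral_add hG1int hG2int] at key
    have hF0 : F 0 = 0 := by simp [hF, hφ0 0 hT₀0]
    rw [hF0] at key
    -- key : ∫ G1 + ∫ G2 = 0 - 0
    have hG2eq : (∫ t in Set.Ioi (0:ℝ), G2 t) = -(∫ t in Set.Ioi (0:ℝ), G1 t) := by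
      linear_combination key
    have hG1eq : (∫ t in Set.Ioi (0:ℝ), G1 t)
        = (∫ t in Set.Ioi (0:ℝ), ((deriv φ t : ℝ) : ℂ) * (t : ℂ) ^ (-(s-1))) / (1 - s) := by
      rw [← integral_div]
      congr 1
      funext t
      rw [hG1, show -(s - 1) = (1:ℂ) - s by ring, mul_div_assoc]
    calc (∫ t in Set.Ioi (0 : ℝ), (φ t : ℂ) * (t : ℂ) ^ (-s))
        = -(∫ t in Set.Ioi (0:ℝ), G1 t) := hG2eq
      _ = (∫ t in Set.Ioi (0 : ℝ), ((deriv φ t : ℝ) : ℂ) * (t : ℂ) ^ (-(s - 1))) / (s - 1) := by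
          rw [hG1eq, ← div_neg]
          congr 1
          ring
end

section
/- Let φ : ℝ → ℝ be smooth with support in [T₀, ∞), T₀ ≥ 1, equal to 1 near +∞, and let λ ≠ 0. Then the function f_{φ,λ}(s) := ∫ φ(t) t^{-s} e^{iλt} dt extends from Re(s) > 1 to an entire function on ℂ, and for every m ∈ ℕ it satisfies the identity (iλ)^m f_{φ,λ}(s) = Σ_{j=0}^{m−1} C(m,j) (−1)^{m−j} P_j(s) f_{φ^{(m−j)},λ}(s+j) + P_m(s) f_{φ,λ}(s+m), where P_j(s) = s(s+1)⋯(s+j−1), P₀(s) = 1, and C(m,j) is the binomial coefficient. -/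
open MeasureTheory Complex Filter Set
open scoped Topology

namespace Stmt3

noncomputable def J (lam : ℝ) (ψ : ℝ → ℝ) (s : ℂ) : ℂ :=
  ∫ t in Set.Ioi (0 : ℝ), (ψ t : ℂ) * (t : ℂ) ^ (-s) * Complex.exp (Complex.I * lam * t)

lemma norm_exp_I (lam : ℝ) (t : ℝ) : ‖Complex.exp (Complex.I * lam * t)‖ = 1 := by
  rw [Complex.norm_exp]
  simp [Complex.mul_re]

lemma cont_integrand (lam : ℝ) (ψ : ℝ → ℝ) (s : ℂ) (hψ : Continuous ψ)
    (hsupp : Function.support ψ ⊆ Set.Ici 1) :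
    Continuous (fun t : ℝ => (ψ t : ℂ) * (t : ℂ) ^ (-s) * Complex.exp (Complex.I * lam * t)) := by
  rw [continuous_iff_continuousAt]
  intro t₀
  rcases lt_or_ge 0 t₀ with h | h
  · have h1 : ContinuousAt (fun t : ℝ => (ψ t : ℂ)) t₀ :=
      (Complex.continuous_ofReal.comp hψ).continuousAt
    have h2 : ContinuousAt (fun t : ℝ => (t : ℂ) ^ (-s)) t₀ := by
      apply ContinuousAt.cpow Complex.continuous_ofReal.continuousAt continuousAt_const
      exact Or.inl (by simpa using h)
    have h3 : ContinuousAt (fun t : ℝ => Complex.exp (Complex.I * lam * t)) t₀ :=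
      (Complex.continuous_exp.comp (by continuity)).continuousAt
    exact (h1.mul h2).mul h3
  · have hev : ∀ᶠ t in nhds t₀, (ψ t : ℂ) * (t : ℂ) ^ (-s) * Complex.exp (Complex.I * lam * t) = 0 := by
      filter_upwards [Iio_mem_nhds (show t₀ < 1 by linarith)] with t ht
      have : ψ t = 0 := by
        by_contra hne
        have := hsupp hne
        simp only [Set.mem_Ici] at this
        simp only [Set.mem_Iio] at ht
        linarith
      simp [this]
    exact (continuousAt_const (y := (0:ℂ))).congr (by filter_upwards [hev] with t ht using ht.symm)

lemma integral_Ioi_half (f : ℝ → ℂ) (hf : ∀ t ∈ Set.Ioc (0:ℝ) (1/2), f t = 0) :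
    ∫ t in Set.Ioi (0:ℝ), f t = ∫ t in Set.Ioi (1/2 : ℝ), f t := by
  have h1 : ∫ t in Set.Ioi (0:ℝ), f t = ∫ t in Set.Ioi (0:ℝ), Set.indicator (Set.Ioi (1/2:ℝ)) f t := by
    apply setIntegral_congr_fun measurableSet_Ioi
    intro t ht
    rcases le_or_gt t (1/2) with h | h
    · rw [Set.indicator_of_notMem (by simpa using h), hf t ⟨ht, h⟩]
    · rw [Set.indicator_of_mem (by simpa using h)]
  rw [h1, setIntegral_indicator measurableSet_Ioi]
  congr 1
  rw [Set.Ioi_inter_Ioi]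
  norm_num

lemma norm_integrand (ψ : ℝ → ℝ) (s : ℂ) (lam t : ℝ) (ht : 0 < t) :
    ‖(ψ t : ℂ) * (t : ℂ) ^ (-s) * Complex.exp (Complex.I * lam * t)‖
      = |ψ t| * t ^ (-s.re) := by
  rw [norm_mul, norm_mul, norm_exp_I, mul_one, Complex.norm_real, Real.norm_eq_abs,
    Complex.norm_cpow_eq_rpow_re_of_pos ht]
  simp

lemma integrable_of_bounded (lam : ℝ) (ψ : ℝ → ℝ) (s : ℂ) (hs : 1 < s.re)
    (hψ : Continuous ψ) (hsupp : Function.support ψ ⊆ Set.Ici 1)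
    (M : ℝ) (hM : ∀ t, |ψ t| ≤ M) :
    IntegrableOn (fun t : ℝ => (ψ t : ℂ) * (t : ℂ) ^ (-s) * Complex.exp (Complex.I * lam * t))
      (Set.Ioi 0) := by
  rw [← Set.Ioc_union_Ioi_eq_Ioi (by norm_num : (0:ℝ) ≤ 1/2)]
  apply MeasureTheory.IntegrableOn.union
  · apply (integrableOn_zero (s := Set.Ioc (0:ℝ) (1/2))).congr_fun _ measurableSet_Ioc
    intro t ht
    have : ψ t = 0 := by
      by_contra hne
      have := hsupp hne
      simp only [Set.mem_Ici] at this
      have := ht.2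
      linarith
    simp [this]
  · have hint : IntegrableOn (fun t : ℝ => M * t ^ (-s.re)) (Set.Ioi (1/2 : ℝ)) :=
      (integrableOn_Ioi_rpow_of_lt (by linarith) (by norm_num)).const_mul M
    apply hint.integrable.mono'
    · exact ((cont_integrand lam ψ s hψ hsupp).aestronglyMeasurable).restrict
    · rw [MeasureTheory.ae_restrict_iff' measurableSet_Ioi]
      filter_upwards with t ht
      have ht' : (0:ℝ) < t := lt_trans (by norm_num) ht
      rw [norm_integrand ψ s lam t ht']
      have : (0:ℝ) ≤ t ^ (-s.re) := Real.rpow_nonneg ht'.le _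
      exact mul_le_mul_of_nonneg_right (hM t) this

lemma tendsto_of_bounded (ψ : ℝ → ℝ) (s : ℂ) (hs : 0 < s.re)
    (M : ℝ) (hM : ∀ t, |ψ t| ≤ M) :
    Tendsto (fun t : ℝ => (ψ t : ℂ) * (t : ℂ) ^ (-s)) atTop (𝓝 0) := by
  rw [tendsto_zero_iff_norm_tendsto_zero]
  apply squeeze_zero' (g := fun t : ℝ => M * t ^ (-s.re))
  · filter_upwards with t using norm_nonneg _
  · filter_upwards [Ioi_mem_atTop (0:ℝ)] with t ht
    rw [norm_mul, Complex.norm_real, Real.norm_eq_abs,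
      Complex.norm_cpow_eq_rpow_re_of_pos ht]
    simp only [neg_re]
    exact mul_le_mul_of_nonneg_right (hM t) (Real.rpow_nonneg (le_of_lt ht) _)
  · have := (tendsto_rpow_neg_atTop hs).const_mul M
    simpa using this

lemma integrable_of_compact (lam : ℝ) (ψ : ℝ → ℝ) (s : ℂ) (b : ℝ)
    (hψ : Continuous ψ) (hsupp : Function.support ψ ⊆ Set.Icc 1 b) :
    IntegrableOn (fun t : ℝ => (ψ t : ℂ) * (t : ℂ) ^ (-s) * Complex.exp (Complex.I * lam * t))
      (Set.Ioi 0) := by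
  have hc : Continuous (fun t : ℝ => (ψ t : ℂ) * (t : ℂ) ^ (-s) * Complex.exp (Complex.I * lam * t)) :=
    cont_integrand lam ψ s hψ (hsupp.trans Set.Icc_subset_Ici_self)
  have hcs : HasCompactSupport (fun t : ℝ => (ψ t : ℂ) * (t : ℂ) ^ (-s) * Complex.exp (Complex.I * lam * t)) := by
    apply HasCompactSupport.intro (isCompact_Icc (a := (1:ℝ)) (b := b))
    intro x hx
    have : ψ x = 0 := by
      by_contra hne
      exact hx (hsupp hne)
    simp [this]
  exact (hc.integrable_of_hasCompactSupport hcs).integrableOn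

lemma tendsto_of_compact (ψ : ℝ → ℝ) (s : ℂ) (b : ℝ)
    (hsupp : Function.support ψ ⊆ Set.Icc 1 b) :
    Tendsto (fun t : ℝ => (ψ t : ℂ) * (t : ℂ) ^ (-s)) atTop (𝓝 0) := by
  apply Tendsto.congr' _ (tendsto_const_nhds (x := (0:ℂ)))
  filter_upwards [Ioi_mem_atTop b] with t ht
  have : ψ t = 0 := by
    by_contra hne
    have := (hsupp hne).2
    simp only [Set.mem_Ioi] at ht
    linarith
  simp [this]

lemma hasDerivAt_exp_I (lam : ℝ) (t : ℝ) :
    HasDerivAt (fun t : ℝ => Complex.exp (Complex.I * lam * t))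
      (Complex.I * lam * Complex.exp (Complex.I * lam * t)) t := by
  have h : HasDerivAt (fun z : ℂ => Complex.exp (Complex.I * lam * z))
      (Complex.I * lam * Complex.exp (Complex.I * lam * (t:ℂ))) (t:ℂ) := by
    have := ((hasDerivAt_id ((t:ℝ):ℂ)).const_mul (Complex.I * lam)).cexp
    simpa [mul_comm] using this
  exact h.comp_ofReal

lemma hasDerivAt_cpow_ofReal (s : ℂ) (t : ℝ) (ht : 0 < t) :
    HasDerivAt (fun t : ℝ => (t : ℂ) ^ (-s)) (-s * (t : ℂ) ^ (-s - 1)) t := by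
  have h : HasDerivAt (fun z : ℂ => z ^ (-s)) (-s * (t : ℂ) ^ (-s - 1)) (t : ℂ) :=
    (Complex.hasStrictDerivAt_cpow_const (by simp only [Complex.mem_slitPlane_iff, Complex.ofReal_re, Complex.ofReal_im]; exact Or.inl ht)).hasDerivAt
  exact h.comp_ofReal

lemma ibp (lam : ℝ) (ψ ψ' : ℝ → ℝ) (s : ℂ)
    (hd : ∀ t, HasDerivAt ψ (ψ' t) t)
    (hψc : Continuous ψ) (hψ'c : Continuous ψ')
    (hsupp : Function.support ψ ⊆ Set.Ici 1)
    (hsupp' : Function.support ψ' ⊆ Set.Ici 1)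
    (h1 : IntegrableOn (fun t : ℝ => (ψ t : ℂ) * (t:ℂ)^(-s) * Complex.exp (Complex.I*lam*t)) (Set.Ioi 0))
    (h2 : IntegrableOn (fun t : ℝ => (ψ' t : ℂ) * (t:ℂ)^(-s) * Complex.exp (Complex.I*lam*t)) (Set.Ioi 0))
    (h3 : IntegrableOn (fun t : ℝ => (ψ t : ℂ) * (t:ℂ)^(-(s+1)) * Complex.exp (Complex.I*lam*t)) (Set.Ioi 0))
    (htop : Tendsto (fun t : ℝ => (ψ t : ℂ) * (t:ℂ)^(-s)) atTop (𝓝 0)) :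
    Complex.I * lam * J lam ψ s = -(J lam ψ' s) + s * J lam ψ (s+1) := by
  have hzero : ∀ t : ℝ, t < 1 → ψ t = 0 := by
    intro t ht
    by_contra hne
    have := hsupp hne
    simp only [Set.mem_Ici] at this; linarith
  have hzero' : ∀ t : ℝ, t < 1 → ψ' t = 0 := by
    intro t ht
    by_contra hne
    have := hsupp' hne
    simp only [Set.mem_Ici] at this; linarith
  have hcpow_eq : ∀ t : ℝ, (t:ℂ)^(-s-1) = (t:ℂ)^(-(s+1)) := by
    intro t; congr 1; ring
  have hsub : Set.Ioi (1/2:ℝ) ⊆ Set.Ioi (0:ℝ) := Set.Ioi_subset_Ioi (by norm_num)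
  have hderiv : ∀ t ∈ Set.Ioi (1/2 : ℝ), HasDerivAt
      (fun t : ℝ => (ψ t : ℂ) * (t:ℂ)^(-s) * Complex.exp (Complex.I*lam*t))
      ((ψ' t : ℂ) * (t:ℂ)^(-s) * Complex.exp (Complex.I*lam*t)
        + (-s) * ((ψ t : ℂ) * (t:ℂ)^(-(s+1)) * Complex.exp (Complex.I*lam*t))
        + (Complex.I * lam) * ((ψ t : ℂ) * (t:ℂ)^(-s) * Complex.exp (Complex.I*lam*t))) t := by
    intro t ht
    simp only [Set.mem_Ioi] at ht
    have ht0 : (0:ℝ) < t := by linarith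
    have hψd : HasDerivAt (fun u : ℝ => ((ψ u : ℝ) : ℂ)) (ψ' t) t := (hd t).ofReal_comp
    have hpow := hasDerivAt_cpow_ofReal s t ht0
    have hexp := hasDerivAt_exp_I lam t
    have := (hψd.mul hpow).mul hexp
    refine this.congr_deriv ?_
    simp only [Pi.mul_apply]
    rw [← hcpow_eq t]
    push_cast
    ring
  have hcont : ContinuousWithinAt
      (fun t : ℝ => (ψ t : ℂ) * (t:ℂ)^(-s) * Complex.exp (Complex.I*lam*t))
      (Set.Ici (1/2 : ℝ)) (1/2) :=
    ((cont_integrand lam ψ s hψc hsupp).continuousAt).continuousWithinAt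
  have hGtop : Tendsto (fun t : ℝ => (ψ t : ℂ) * (t:ℂ)^(-s) * Complex.exp (Complex.I*lam*t))
      atTop (𝓝 0) := by
    rw [tendsto_zero_iff_norm_tendsto_zero]
    apply squeeze_zero' (g := fun t : ℝ => ‖(ψ t : ℂ) * (t:ℂ)^(-s)‖)
    · filter_upwards with t using norm_nonneg _
    · filter_upwards with t
      rw [norm_mul, norm_exp_I]
      simp
    · rw [← tendsto_zero_iff_norm_tendsto_zero]
      exact htop
  have hint : IntegrableOn (fun t : ℝ =>
      (ψ' t : ℂ) * (t:ℂ)^(-s) * Complex.exp (Complex.I*lam*t)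
        + (-s) * ((ψ t : ℂ) * (t:ℂ)^(-(s+1)) * Complex.exp (Complex.I*lam*t))
        + (Complex.I * lam) * ((ψ t : ℂ) * (t:ℂ)^(-s) * Complex.exp (Complex.I*lam*t)))
      (Set.Ioi (1/2 : ℝ)) :=
    ((h2.mono_set hsub).add ((h3.mono_set hsub).const_mul (-s))).add
      ((h1.mono_set hsub).const_mul (Complex.I * lam))
  have key := integral_Ioi_of_hasDerivAt_of_tendsto hcont hderiv hint hGtop
  have hGhalf : ((ψ (1/2) : ℂ) * ((1/2 : ℝ):ℂ)^(-s) * Complex.exp (Complex.I*lam*((1/2:ℝ):ℂ))) = 0 := by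
    rw [hzero (1/2) (by norm_num)]; simp
  rw [hGhalf, zero_sub, neg_zero] at key
  have hIA : IntegrableOn (fun t : ℝ => (ψ' t : ℂ) * (t:ℂ)^(-s) * Complex.exp (Complex.I*lam*t)
        + (-s) * ((ψ t : ℂ) * (t:ℂ)^(-(s+1)) * Complex.exp (Complex.I*lam*t)))
      (Set.Ioi (1/2:ℝ)) := (h2.mono_set hsub).add ((h3.mono_set hsub).const_mul (-s))
  have hIB : IntegrableOn (fun t : ℝ =>
        (Complex.I * lam) * ((ψ t : ℂ) * (t:ℂ)^(-s) * Complex.exp (Complex.I*lam*t)))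
      (Set.Ioi (1/2:ℝ)) := (h1.mono_set hsub).const_mul (Complex.I * lam)
  have hIC : IntegrableOn (fun t : ℝ =>
        (-s) * ((ψ t : ℂ) * (t:ℂ)^(-(s+1)) * Complex.exp (Complex.I*lam*t)))
      (Set.Ioi (1/2:ℝ)) := (h3.mono_set hsub).const_mul (-s)
  rw [MeasureTheory.integral_add hIA hIB, MeasureTheory.integral_add (h2.mono_set hsub) hIC,
    MeasureTheory.integral_const_mul, MeasureTheory.integral_const_mul] at key
  have hhalf1 : ∫ t in Set.Ioi (0:ℝ), (ψ' t : ℂ) * (t:ℂ)^(-s) * Complex.exp (Complex.I*lam*t)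
      = ∫ t in Set.Ioi (1/2:ℝ), (ψ' t : ℂ) * (t:ℂ)^(-s) * Complex.exp (Complex.I*lam*t) := by
    apply integral_Ioi_half
    intro t ht
    rw [hzero' t (by linarith [ht.2])]
    simp
  have hhalf2 : ∫ t in Set.Ioi (0:ℝ), (ψ t : ℂ) * (t:ℂ)^(-(s+1)) * Complex.exp (Complex.I*lam*t)
      = ∫ t in Set.Ioi (1/2:ℝ), (ψ t : ℂ) * (t:ℂ)^(-(s+1)) * Complex.exp (Complex.I*lam*t) := by
    apply integral_Ioi_half
    intro t ht
    rw [hzero t (by linarith [ht.2])]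
    simp
  have hhalf3 : ∫ t in Set.Ioi (0:ℝ), (ψ t : ℂ) * (t:ℂ)^(-s) * Complex.exp (Complex.I*lam*t)
      = ∫ t in Set.Ioi (1/2:ℝ), (ψ t : ℂ) * (t:ℂ)^(-s) * Complex.exp (Complex.I*lam*t) := by
    apply integral_Ioi_half
    intro t ht
    rw [hzero t (by linarith [ht.2])]
    simp
  rw [← hhalf1, ← hhalf2, ← hhalf3] at key
  unfold J
  linear_combination key

lemma J_eq_mellin (lam : ℝ) (ψ : ℝ → ℝ) (s : ℂ) :
    J lam ψ s = mellin (fun t : ℝ => (ψ t : ℂ) * Complex.exp (Complex.I * lam * t)) (1 - s) := by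
  unfold J mellin
  apply setIntegral_congr_fun measurableSet_Ioi
  intro t ht
  rw [show (1:ℂ) - s - 1 = -s by ring]
  simp only [smul_eq_mul]
  ring

lemma J_diff_bounded (lam : ℝ) (ψ : ℝ → ℝ) (s : ℂ) (hs : 1 < s.re)
    (hψ : Continuous ψ) (hsupp : Function.support ψ ⊆ Set.Ici 1)
    (M : ℝ) (hM : ∀ t, |ψ t| ≤ M) :
    DifferentiableAt ℂ (J lam ψ) s := by
  set f : ℝ → ℂ := fun t => (ψ t : ℂ) * Complex.exp (Complex.I * lam * t) with hf
  have hfc : Continuous f := (Complex.continuous_ofReal.comp hψ).mul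
    (Complex.continuous_exp.comp (by continuity))
  have hzero : ∀ t : ℝ, t < 1 → ψ t = 0 := by
    intro t ht
    by_contra hne
    have := hsupp hne
    simp only [Set.mem_Ici] at this; linarith
  have htop : f =O[atTop] (fun x : ℝ => x ^ (-(0:ℝ))) := by
    rw [Asymptotics.isBigO_iff]
    refine ⟨M, ?_⟩
    filter_upwards [Ioi_mem_atTop (0:ℝ)] with t ht
    rw [hf]
    simp only
    rw [norm_mul, norm_exp_I, mul_one, Complex.norm_real]
    rw [neg_zero, Real.rpow_zero]
    simpa using hM t
  have hbot : f =O[𝓝[>] (0:ℝ)] (fun x : ℝ => x ^ (-((1 - s).re - 1))) := by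
    have hev : f =ᶠ[𝓝[>] (0:ℝ)] (fun _ => (0:ℂ)) := by
      filter_upwards [Ioo_mem_nhdsGT_of_mem (by norm_num : (0:ℝ) ∈ Set.Ico 0 1)] with t ht
      rw [hf]; simp only
      rw [hzero t ht.2]; simp
    exact hev.trans_isBigO (Asymptotics.isBigO_zero _ _)
  have hloc : LocallyIntegrableOn f (Set.Ioi (0:ℝ)) :=
    hfc.locallyIntegrable.locallyIntegrableOn _
  have hdm : DifferentiableAt ℂ (mellin f) (1 - s) := by
    apply mellin_differentiableAt_of_isBigO_rpow hloc htop (by simp only [Complex.sub_re, Complex.one_re, neg_neg, neg_zero]; linarith) hbot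
    simp only [Complex.sub_re, Complex.one_re]
    linarith
  have heq : J lam ψ = (fun z : ℂ => mellin f (1 - z)) := funext fun z => J_eq_mellin lam ψ z
  rw [heq]
  exact hdm.comp s ((differentiableAt_const (1:ℂ)).sub differentiableAt_id)

lemma J_diff_compact (lam : ℝ) (ψ : ℝ → ℝ) (b : ℝ)
    (hψ : Continuous ψ) (hsupp : Function.support ψ ⊆ Set.Icc 1 b) :
    Differentiable ℂ (J lam ψ) := by
  intro s
  set f : ℝ → ℂ := fun t => (ψ t : ℂ) * Complex.exp (Complex.I * lam * t) with hf
  have hfc : Continuous f := (Complex.continuous_ofReal.comp hψ).mul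
    (Complex.continuous_exp.comp (by continuity))
  have hzero : ∀ t : ℝ, t < 1 ∨ b < t → ψ t = 0 := by
    intro t ht
    by_contra hne
    have h2 := hsupp hne
    rcases ht with h | h
    · exact absurd h2.1 (by linarith)
    · exact absurd h2.2 (by linarith)
  have htop : f =O[atTop] (fun x : ℝ => x ^ (-((1 - s).re + 1))) := by
    have hev : f =ᶠ[atTop] (fun _ => (0:ℂ)) := by
      filter_upwards [Ioi_mem_atTop b] with t ht
      rw [hf]; simp only
      rw [hzero t (Or.inr ht)]; simp
    exact hev.trans_isBigO (Asymptotics.isBigO_zero _ _)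
  have hbot : f =O[𝓝[>] (0:ℝ)] (fun x : ℝ => x ^ (-((1 - s).re - 1))) := by
    have hev : f =ᶠ[𝓝[>] (0:ℝ)] (fun _ => (0:ℂ)) := by
      filter_upwards [Ioo_mem_nhdsGT_of_mem (by norm_num : (0:ℝ) ∈ Set.Ico 0 1)] with t ht
      rw [hf]; simp only
      rw [hzero t (Or.inl ht.2)]; simp
    exact hev.trans_isBigO (Asymptotics.isBigO_zero _ _)
  have hloc : LocallyIntegrableOn f (Set.Ioi (0:ℝ)) :=
    hfc.locallyIntegrable.locallyIntegrableOn _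
  have hdm : DifferentiableAt ℂ (mellin f) (1 - s) := by
    apply mellin_differentiableAt_of_isBigO_rpow hloc htop (by linarith) hbot
    linarith
  have heq : J lam ψ = (fun z : ℂ => mellin f (1 - z)) := funext fun z => J_eq_mellin lam ψ z
  rw [heq]
  exact hdm.comp s ((differentiableAt_const (1:ℂ)).sub differentiableAt_id)

lemma rec_formula (c : ℂ) (A : ℕ → ℂ → ℂ)
    (h : ∀ k s, c * A k s = -(A (k+1) s) + s * A k (s+1)) :
    ∀ (m k : ℕ) (s : ℂ), c ^ m * A k s =
      (∑ j ∈ Finset.range m, (Nat.choose m j : ℂ) * (-1:ℂ) ^ (m - j) *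
        (∏ i ∈ Finset.range j, (s + (i:ℂ))) * A (k + (m - j)) (s + (j:ℂ)))
      + (∏ i ∈ Finset.range m, (s + (i:ℂ))) * A k (s + (m:ℂ)) := by
  intro m
  induction m with
  | zero => intro k s; simp
  | succ m IH =>
    intro k s
    have step1 : c ^ (m+1) * A k s = -(c ^ m * A (k+1) s) + s * (c ^ m * A k (s+1)) := by
      have := h k s
      calc c ^ (m+1) * A k s = c ^ m * (c * A k s) := by ring
        _ = c ^ m * (-(A (k+1) s) + s * A k (s+1)) := by rw [this]
        _ = -(c ^ m * A (k+1) s) + s * (c ^ m * A k (s+1)) := by ring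
    rw [step1, IH (k+1) s, IH k (s+1)]
    -- abbreviations
    set P : ℂ → ℕ → ℂ := fun z j => ∏ i ∈ Finset.range j, (z + (i:ℂ)) with hP
    -- claim C : s * P (s+1) m * A k ((s+1)+m) = P s (m+1) * A k (s + (m+1))
    have hPsucc : ∀ j : ℕ, P s (j+1) = s * P (s+1) j := by
      intro j
      rw [hP]
      simp only
      rw [Finset.prod_range_succ']
      have : ∀ i ∈ Finset.range j, (s + ((i+1 : ℕ) : ℂ)) = ((s+1) + (i:ℂ)) := by
        intro i _; push_cast; ring
      rw [Finset.prod_congr rfl this]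
      push_cast
      ring
    have hargs : ∀ j : ℕ, (s + 1) + (j:ℂ) = s + ((j+1 : ℕ) : ℂ) := by
      intro j; push_cast; ring
    -- Claim A : s * (second sum) = U₁
    have claimA : s * (∑ j ∈ Finset.range m, (Nat.choose m j : ℂ) * (-1:ℂ) ^ (m - j) *
          P (s+1) j * A (k + (m - j)) ((s+1) + (j:ℂ)))
        = ∑ j ∈ Finset.range m, (Nat.choose m j : ℂ) * (-1:ℂ) ^ (m - j) *
          P s (j+1) * A (k + (m - j)) (s + ((j+1 : ℕ) : ℂ)) := by
      rw [Finset.mul_sum]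
      apply Finset.sum_congr rfl
      intro j _
      rw [hPsucc j, hargs j]
      ring
    -- Claim B : -(S₁) - P s m * A (k+1) (s+m) = V
    have claimB : -(∑ j ∈ Finset.range m, (Nat.choose m j : ℂ) * (-1:ℂ) ^ (m - j) *
          P s j * A ((k+1) + (m - j)) (s + (j:ℂ)))
          - P s m * A (k+1) (s + (m:ℂ))
        = ∑ j ∈ Finset.range (m+1), (Nat.choose m j : ℂ) * (-1:ℂ) ^ (m + 1 - j) *
          P s j * A (k + (m + 1 - j)) (s + (j:ℂ)) := by
      rw [Finset.sum_range_succ]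
      have e1 : m + 1 - m = 1 := by omega
      rw [e1]
      have e2 : ∀ j ∈ Finset.range m, (Nat.choose m j : ℂ) * (-1:ℂ) ^ (m + 1 - j) *
          P s j * A (k + (m + 1 - j)) (s + (j:ℂ))
          = -((Nat.choose m j : ℂ) * (-1:ℂ) ^ (m - j) * P s j * A ((k+1) + (m - j)) (s + (j:ℂ))) := by
        intro j hj
        have hjm : j < m := Finset.mem_range.1 hj
        have e3 : m + 1 - j = (m - j) + 1 := by omega
        have e4 : k + (m + 1 - j) = (k + 1) + (m - j) := by omega
        rw [e4, e3, pow_succ]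
        ring
      rw [Finset.sum_congr rfl e2, Finset.sum_neg_distrib]
      simp only [Nat.choose_self, Nat.cast_one, pow_one]
      ring
    -- Now assemble
    have splitgoal : ∑ j ∈ Finset.range (m+1), ((Nat.choose (m+1) j : ℂ) * (-1:ℂ) ^ (m + 1 - j) *
          P s j * A (k + (m + 1 - j)) (s + (j:ℂ)))
        = (∑ j ∈ Finset.range m, (Nat.choose m j : ℂ) * (-1:ℂ) ^ (m - j) *
            P s (j+1) * A (k + (m - j)) (s + ((j+1 : ℕ) : ℂ)))
          + (∑ j ∈ Finset.range (m+1), (Nat.choose m j : ℂ) * (-1:ℂ) ^ (m + 1 - j) *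
            P s j * A (k + (m + 1 - j)) (s + (j:ℂ))) := by
      rw [Finset.sum_range_succ' (fun j => (Nat.choose (m+1) j : ℂ) * (-1:ℂ) ^ (m + 1 - j) *
          P s j * A (k + (m + 1 - j)) (s + (j:ℂ))) m]
      rw [Finset.sum_range_succ' (fun j => (Nat.choose m j : ℂ) * (-1:ℂ) ^ (m + 1 - j) *
          P s j * A (k + (m + 1 - j)) (s + (j:ℂ))) m]
      have e5 : ∀ j ∈ Finset.range m, (Nat.choose (m+1) (j+1) : ℂ) * (-1:ℂ) ^ (m + 1 - (j+1)) *
          P s (j+1) * A (k + (m + 1 - (j+1))) (s + ((j+1 : ℕ) : ℂ))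
          = (Nat.choose m j : ℂ) * (-1:ℂ) ^ (m - j) * P s (j+1) * A (k + (m - j)) (s + ((j+1 : ℕ) : ℂ))
            + (Nat.choose m (j+1) : ℂ) * (-1:ℂ) ^ (m + 1 - (j+1)) *
              P s (j+1) * A (k + (m + 1 - (j+1))) (s + ((j+1 : ℕ) : ℂ)) := by
        intro j hj
        have e6 : m + 1 - (j + 1) = m - j := by omega
        rw [e6, Nat.choose_succ_succ]
        push_cast
        ring
      rw [Finset.sum_congr rfl e5, Finset.sum_add_distrib]
      simp only [Nat.choose_zero_right, Nat.cast_one]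
      ring
    rw [splitgoal, ← claimA, ← claimB]
    have e8 : P s (m+1) * A k (s + ((m+1 : ℕ) : ℂ)) = s * (P (s+1) m * A k ((s+1) + (m:ℂ))) := by
      rw [hPsucc m, show s + ((m+1 : ℕ) : ℂ) = (s+1) + (m:ℂ) by push_cast; ring]
      ring
    rw [e8]
    ring

noncomputable def Fn (lam : ℝ) (φ : ℝ → ℝ) : ℕ → ℂ → ℂ
  | 0 => J lam φ
  | n+1 => fun s => (Complex.I * lam)⁻¹ *
      (-(J lam (iteratedDeriv 1 φ) s) + s * Fn lam φ n (s+1))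

noncomputable def Fext (lam : ℝ) (φ : ℝ → ℝ) (s : ℂ) : ℂ := Fn lam φ ⌈2 - s.re⌉₊ s

end Stmt3


/-- For smooth `φ` supported in `[T₀, ∞)`, `T₀ ≥ 1`, equal to `1` on `[T₁, ∞)`,
and `λ ≠ 0`, the function `f_{φ,λ}(s) = ∫₀^∞ φ(t) t^{-s} e^{iλt} dt` extends from
`Re s > 1` to an entire function `F` on `ℂ` satisfying, for every `m ∈ ℕ`,
`(iλ)^m F(s) = Σ_{j<m} C(m,j) (-1)^{m-j} P_j(s) f_{φ^{(m-j)},λ}(s+j) + P_m(s) F(s+m)`,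
where `P_j(s) = s(s+1)⋯(s+j-1)`, `P₀ = 1`. -/
theorem stmt3 (φ : ℝ → ℝ) (T₀ T₁ : ℝ) (hT₀ : 1 ≤ T₀)
    (hφ : ContDiff ℝ (⊤ : ℕ∞) φ) (hsupp : Function.support φ ⊆ Set.Ici T₀)
    (hone : ∀ t ≥ T₁, φ t = 1) (lam : ℝ) (hlam : lam ≠ 0) :
    ∃ F : ℂ → ℂ, Differentiable ℂ F ∧
      (∀ s : ℂ, 1 < s.re →
        F s = ∫ t in Set.Ioi (0 : ℝ), (φ t : ℂ) * (t : ℂ) ^ (-s) *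
          Complex.exp (Complex.I * lam * t)) ∧
      ∀ (m : ℕ) (s : ℂ),
        (Complex.I * lam) ^ m * F s =
          (∑ j ∈ Finset.range m, (Nat.choose m j : ℂ) * (-1 : ℂ) ^ (m - j) *
            (∏ k ∈ Finset.range j, (s + (k : ℂ))) *
            ∫ t in Set.Ioi (0 : ℝ), ((iteratedDeriv (m - j) φ t : ℝ) : ℂ) *
              (t : ℂ) ^ (-(s + (j : ℂ))) * Complex.exp (Complex.I * lam * t))
          + (∏ k ∈ Finset.range m, (s + (k : ℂ))) * F (s + m) := by
  classical
  have hlam' : Complex.I * (lam:ℂ) ≠ 0 :=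
    mul_ne_zero Complex.I_ne_zero (Complex.ofReal_ne_zero.2 hlam)
  have hφ' : ContDiff ℝ ((⊤ : ℕ∞) : WithTop ℕ∞) φ := hφ.of_le (by simp)
  have hsm : ∀ k : ℕ, ContDiff ℝ ((⊤ : ℕ∞) : WithTop ℕ∞) (iteratedDeriv k φ) := by
    intro k
    rw [iteratedDeriv_eq_iterate]
    exact ContDiff.iterate_deriv k hφ'
  have hcontk : ∀ k, Continuous (iteratedDeriv k φ) := fun k => (hsm k).continuous
  have hdiffk : ∀ k, Differentiable ℝ (iteratedDeriv k φ) := fun k =>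
    (hsm k).differentiable (by simp)
  have hdk : ∀ (k : ℕ) (t : ℝ), HasDerivAt (iteratedDeriv k φ) (iteratedDeriv (k+1) φ t) t := by
    intro k t
    have := ((hdiffk k) t).hasDerivAt
    rwa [← iteratedDeriv_succ] at this
  set T : ℝ := max T₀ T₁ with hT
  have hT1 : (1:ℝ) ≤ T := le_trans hT₀ (le_max_left _ _)
  have hzero0 : ∀ t, t < T₀ → φ t = 0 := by
    intro t ht
    by_contra hne
    have := hsupp hne
    simp only [Set.mem_Ici] at this; linarith
  have hder0 : ∀ (k : ℕ), ∀ x, x < T₀ → iteratedDeriv k φ x = 0 := by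
    intro k
    induction k with
    | zero => intro x hx; simpa using hzero0 x hx
    | succ k ih =>
      intro x hx
      rw [iteratedDeriv_succ]
      have hev : iteratedDeriv k φ =ᶠ[nhds x] (fun _ => (0:ℝ)) := by
        filter_upwards [Iio_mem_nhds hx] with y hy using ih y hy
      rw [hev.deriv_eq]
      simp
  have hder1 : ∀ (k : ℕ), ∀ x, T < x → iteratedDeriv (k+1) φ x = 0 := by
    intro k
    induction k with
    | zero =>
      intro x hx
      rw [iteratedDeriv_succ]
      have hev : iteratedDeriv 0 φ =ᶠ[nhds x] (fun _ => (1:ℝ)) := by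
        filter_upwards [Ioi_mem_nhds hx] with y hy
        simp only [iteratedDeriv_zero]
        exact hone y (le_trans (le_max_right T₀ T₁) (le_of_lt hy))
      rw [hev.deriv_eq]
      simp
    | succ k ih =>
      intro x hx
      rw [iteratedDeriv_succ]
      have hev : iteratedDeriv (k+1) φ =ᶠ[nhds x] (fun _ => (0:ℝ)) := by
        filter_upwards [Ioi_mem_nhds hx] with y hy using ih y hy
      rw [hev.deriv_eq]
      simp
  have hsuppk : ∀ k : ℕ, Function.support (iteratedDeriv (k+1) φ) ⊆ Set.Icc 1 T := by
    intro k x hx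
    constructor
    · rcases lt_or_ge x T₀ with h | h
      · exact absurd (hder0 (k+1) x h) hx
      · linarith
    · rcases lt_or_ge T x with h | h
      · exact absurd (hder1 k x h) hx
      · exact h
  have hsupp1 : Function.support φ ⊆ Set.Ici 1 :=
    hsupp.trans (Set.Ici_subset_Ici.2 hT₀)
  obtain ⟨M, hM⟩ : ∃ M, ∀ t, |φ t| ≤ M := by
    obtain ⟨M₀, hM₀⟩ := (isCompact_Icc (a := T₀) (b := T)).exists_bound_of_continuousOn
      (hφ.continuous.continuousOn)
    refine ⟨max M₀ 1, fun t => ?_⟩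
    rcases lt_or_ge t T₀ with h | h
    · rw [hzero0 t h]
      simp only [abs_zero]
      exact le_trans zero_le_one (le_max_right _ _)
    · rcases le_or_gt t T with h2 | h2
      · exact le_trans (by simpa [Real.norm_eq_abs] using hM₀ t ⟨h, h2⟩) (le_max_left _ _)
      · rw [hone t (le_trans (le_max_right T₀ T₁) (le_of_lt h2))]
        simpa using le_max_right M₀ 1
  -- one-step identities
  have hstepφ : ∀ s : ℂ, 1 < s.re →
      Complex.I * lam * Stmt3.J lam φ s
        = -(Stmt3.J lam (iteratedDeriv 1 φ) s) + s * Stmt3.J lam φ (s+1) := by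
    intro s hs
    refine Stmt3.ibp lam φ (iteratedDeriv 1 φ) s (fun t => by simpa using hdk 0 t)
      hφ.continuous (hcontk 1) hsupp1 ((hsuppk 0).trans Set.Icc_subset_Ici_self)
      (Stmt3.integrable_of_bounded lam φ s hs hφ.continuous hsupp1 M hM)
      (Stmt3.integrable_of_compact lam _ s T (hcontk 1) (hsuppk 0))
      (Stmt3.integrable_of_bounded lam φ (s+1)
        (by simp only [Complex.add_re, Complex.one_re]; linarith) hφ.continuous hsupp1 M hM)
      (Stmt3.tendsto_of_bounded φ s (by linarith) M hM)
  have hstepg : ∀ (k : ℕ) (s : ℂ),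
      Complex.I * lam * Stmt3.J lam (iteratedDeriv (k+1) φ) s
        = -(Stmt3.J lam (iteratedDeriv (k+2) φ) s)
          + s * Stmt3.J lam (iteratedDeriv (k+1) φ) (s+1) := by
    intro k s
    refine Stmt3.ibp lam _ _ s (fun t => hdk (k+1) t) (hcontk (k+1)) (hcontk (k+2))
      ((hsuppk k).trans Set.Icc_subset_Ici_self) ((hsuppk (k+1)).trans Set.Icc_subset_Ici_self)
      (Stmt3.integrable_of_compact lam _ s T (hcontk (k+1)) (hsuppk k))
      (Stmt3.integrable_of_compact lam _ s T (hcontk (k+2)) (hsuppk (k+1)))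
      (Stmt3.integrable_of_compact lam _ (s+1) T (hcontk (k+1)) (hsuppk k))
      (Stmt3.tendsto_of_compact _ s T (hsuppk k))
  -- the extension
  have hn : ∀ s : ℂ, 1 < s.re + (⌈2 - s.re⌉₊ : ℝ) := by
    intro s
    have := Nat.le_ceil (2 - s.re)
    linarith
  have hFnsucc : ∀ (n : ℕ) (s : ℂ), 1 < s.re + n →
      Stmt3.Fn lam φ (n+1) s = Stmt3.Fn lam φ n s := by
    intro n
    induction n with
    | zero =>
      intro s hs
      simp only [Nat.cast_zero, add_zero] at hs
      show (Complex.I * lam)⁻¹ *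
        (-(Stmt3.J lam (iteratedDeriv 1 φ) s) + s * Stmt3.Fn lam φ 0 (s+1))
        = Stmt3.J lam φ s
      show (Complex.I * lam)⁻¹ *
        (-(Stmt3.J lam (iteratedDeriv 1 φ) s) + s * Stmt3.J lam φ (s+1))
        = Stmt3.J lam φ s
      rw [← hstepφ s hs]
      exact inv_mul_cancel_left₀ hlam' _
    | succ n ih =>
      intro s hs
      show (Complex.I * lam)⁻¹ *
        (-(Stmt3.J lam (iteratedDeriv 1 φ) s) + s * Stmt3.Fn lam φ (n+1) (s+1))
        = (Complex.I * lam)⁻¹ *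
        (-(Stmt3.J lam (iteratedDeriv 1 φ) s) + s * Stmt3.Fn lam φ n (s+1))
      rw [ih (s+1) (by simp only [Complex.add_re, Complex.one_re]; push_cast at hs ⊢; linarith)]
  have hFnge : ∀ (n m : ℕ), n ≤ m → ∀ s : ℂ, 1 < s.re + n →
      Stmt3.Fn lam φ m s = Stmt3.Fn lam φ n s := by
    intro n m hnm
    induction m, hnm using Nat.le_induction with
    | base => intro s _; rfl
    | succ m hnm ih =>
      intro s hs
      rw [hFnsucc m s (by push_cast at hs ⊢; have : (n:ℝ) ≤ m := Nat.cast_le.2 hnm; linarith)]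
      exact ih s hs
  have hFeq : ∀ (n : ℕ) (s : ℂ), 1 < s.re + n →
      Stmt3.Fext lam φ s = Stmt3.Fn lam φ n s := by
    intro n s hs
    unfold Stmt3.Fext
    rcases le_total n ⌈2 - s.re⌉₊ with h | h
    · exact hFnge n _ h s hs
    · rw [hFnge _ n h s (hn s)]
  have hFstep : ∀ s : ℂ, Complex.I * lam * Stmt3.Fext lam φ s
      = -(Stmt3.J lam (iteratedDeriv 1 φ) s) + s * Stmt3.Fext lam φ (s+1) := by
    intro s
    set N : ℕ := ⌈2 - s.re⌉₊ with hN
    have h1 : 1 < s.re + (N:ℝ) := hn s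
    have e1 : Stmt3.Fext lam φ s = Stmt3.Fn lam φ (N+1) s :=
      hFeq (N+1) s (by push_cast; linarith)
    have e2 : Stmt3.Fext lam φ (s+1) = Stmt3.Fn lam φ N (s+1) :=
      hFeq N (s+1) (by simp only [Complex.add_re, Complex.one_re]; linarith)
    rw [e1, e2]
    show Complex.I * lam * ((Complex.I * lam)⁻¹ *
      (-(Stmt3.J lam (iteratedDeriv 1 φ) s) + s * Stmt3.Fn lam φ N (s+1))) = _
    rw [mul_inv_cancel_left₀ hlam']
  have hdiffFn : ∀ (n : ℕ) (s : ℂ), 1 - n < s.re → DifferentiableAt ℂ (Stmt3.Fn lam φ n) s := by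
    intro n
    induction n with
    | zero =>
      intro s hs
      simp only [Nat.cast_zero, sub_zero] at hs
      exact Stmt3.J_diff_bounded lam φ s hs hφ.continuous hsupp1 M hM
    | succ n ih =>
      intro s hs
      have hdg : Differentiable ℂ (Stmt3.J lam (iteratedDeriv 1 φ)) :=
        Stmt3.J_diff_compact lam _ T (hcontk 1) (hsuppk 0)
      have h2 : DifferentiableAt ℂ (fun z : ℂ => Stmt3.Fn lam φ n (z+1)) s := by
        have := ih (s+1) (by simp only [Complex.add_re, Complex.one_re]; push_cast at hs ⊢; linarith)
        exact this.comp s (differentiableAt_id.add_const 1)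
      have : DifferentiableAt ℂ (fun z : ℂ => (Complex.I * lam)⁻¹ *
          (-(Stmt3.J lam (iteratedDeriv 1 φ) z) + z * Stmt3.Fn lam φ n (z+1))) s :=
        (((hdg s).neg.add (differentiableAt_id.mul h2)).const_mul _)
      exact this
  have hFdiff : Differentiable ℂ (Stmt3.Fext lam φ) := by
    intro s₀
    set n : ℕ := ⌈2 - s₀.re⌉₊ with hn0
    have h1 : 1 - (n:ℝ) < s₀.re := by have := hn s₀; linarith
    have hopen : IsOpen {s : ℂ | 1 - (n:ℝ) < s.re} :=
      isOpen_lt continuous_const Complex.continuous_re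
    have hev : Stmt3.Fext lam φ =ᶠ[nhds s₀] Stmt3.Fn lam φ n := by
      filter_upwards [hopen.mem_nhds h1] with s hs
      exact hFeq n s (by linarith [hs])
    exact (hev.differentiableAt_iff).2 (hdiffFn n s₀ h1)
  refine ⟨Stmt3.Fext lam φ, hFdiff, ?_, ?_⟩
  · intro s hs
    have := hFeq 0 s (by simpa using hs)
    exact this
  · intro m s
    have hA : ∀ (k : ℕ) (z : ℂ),
        (Complex.I * lam) * (if k = 0 then Stmt3.Fext lam φ z
            else Stmt3.J lam (iteratedDeriv k φ) z)
          = -(if k + 1 = 0 then Stmt3.Fext lam φ z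
              else Stmt3.J lam (iteratedDeriv (k+1) φ) z)
            + z * (if k = 0 then Stmt3.Fext lam φ (z+1)
              else Stmt3.J lam (iteratedDeriv k φ) (z+1)) := by
      intro k z
      cases k with
      | zero => simpa using hFstep z
      | succ k => simpa using hstepg k z
    have key := Stmt3.rec_formula (Complex.I * lam)
      (fun k z => if k = 0 then Stmt3.Fext lam φ z else Stmt3.J lam (iteratedDeriv k φ) z)
      hA m 0 s
    simp only [if_pos rfl, zero_add] at key
    have hcong : ∀ j ∈ Finset.range m,
        ((Nat.choose m j : ℂ) * (-1:ℂ) ^ (m - j) * (∏ i ∈ Finset.range j, (s + (i:ℂ))) *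
          (if m - j = 0 then Stmt3.Fext lam φ (s + (j:ℂ))
            else Stmt3.J lam (iteratedDeriv (m-j) φ) (s + (j:ℂ))))
        = ((Nat.choose m j : ℂ) * (-1:ℂ) ^ (m - j) * (∏ i ∈ Finset.range j, (s + (i:ℂ))) *
          Stmt3.J lam (iteratedDeriv (m-j) φ) (s + (j:ℂ))) := by
      intro j hj
      have : m - j ≠ 0 := by
        have := Finset.mem_range.1 hj
        omega
      rw [if_neg this]
    rw [Finset.sum_congr rfl hcong] at key
    exact key
end

section
/- Let T₁ > T₀ > 0 and let φ : ℝ → ℝ be smooth with support in [T₀, ∞) and φ = 1 on [T₁, ∞). For α < 1, the function F_{φ,α}(z) := ∫_{(0,∞)} φ(t) t^{-α} e^{-zt} dt, holomorphic on Re(z) > 0, extends holomorphically to ℂ ∖ (−∞, 0] and satisfies F_{φ,α}(z) = Γ(1−α) z^{α−1} + H_α(z), where H_α is an entire function bounded on ℂ by a constant times (e^{−T₁ Re(z)} + 1). -/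
open MeasureTheory Complex Filter Set

private lemma rpow_exp_integrable {s b : ℝ} (hs : -1 < s) (hb : 0 < b) :
    IntegrableOn (fun t : ℝ => t ^ s * Real.exp (-b * t)) (Ioi 0) := by
  simpa [Real.rpow_one] using integrableOn_rpow_mul_exp_neg_mul_rpow hs one_pos hb

private lemma contOn_ofReal_rpow (α : ℝ) {s : Set ℝ} (h0 : ∀ t ∈ s, t ≠ 0) :
    ContinuousOn (fun t : ℝ => ((t ^ (-α) : ℝ) : ℂ)) s :=
  Complex.continuous_ofReal.comp_continuousOn
    (ContinuousOn.rpow_const continuousOn_id fun t ht => Or.inl (h0 t ht))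

private lemma cont_exp_factor (z : ℂ) : Continuous (fun t : ℝ => Complex.exp (-z * t)) :=
  Complex.continuous_exp.comp (continuous_const.mul Complex.continuous_ofReal)

theorem stmt4 (φ : ℝ → ℝ) (T₀ T₁ : ℝ) (h0 : 0 < T₀) (hT : T₀ < T₁)
    (hφ : ContDiff ℝ (⊤ : ℕ∞) φ) (hsupp : Function.support φ ⊆ Set.Ici T₀)
    (hone : ∀ t ≥ T₁, φ t = 1) (α : ℝ) (hα : α < 1) :
    ∃ (H : ℂ → ℂ) (C : ℝ), Differentiable ℂ H ∧
      (∀ z : ℂ, ‖H z‖ ≤ C * (Real.exp (-T₁ * z.re) + 1)) ∧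
      ∀ z : ℂ, 0 < z.re →
        (∫ t in Set.Ioi (0 : ℝ), (φ t : ℂ) * ((t ^ (-α) : ℝ) : ℂ) *
            Complex.exp (-z * t)) =
          (Real.Gamma (1 - α) : ℂ) * z ^ ((α : ℂ) - 1) + H z := by
  have hT₁ : (0:ℝ) < T₁ := h0.trans hT
  -- bound for |φ - 1| on [0, T₁]
  obtain ⟨M₀, hM₀⟩ := (isCompact_Icc (a := (0:ℝ)) (b := T₁)).exists_bound_of_continuousOn
      ((hφ.continuous.sub continuous_const).continuousOn)
  set M : ℝ := max M₀ 0 with hMdef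
  have hM0 : 0 ≤ M := le_max_right _ _
  have hMb : ∀ t ∈ Ioc (0:ℝ) T₁, |φ t - 1| ≤ M := by
    intro t ht
    have := hM₀ t ⟨ht.1.le, ht.2⟩
    rw [Real.norm_eq_abs] at this
    exact this.trans (le_max_left _ _)
  -- the entire correction term
  set g : ℝ → ℂ := fun t => ((φ t - 1 : ℝ) : ℂ) * ((t ^ (-α) : ℝ) : ℂ) with hgdef
  set H : ℂ → ℂ := fun z => ∫ t in Ioc (0:ℝ) T₁, g t * Complex.exp (-z * t) with hHdef
  have Iα : IntegrableOn (fun t : ℝ => t ^ (-α)) (Ioc 0 T₁) volume :=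
    (intervalIntegral.intervalIntegrable_rpow' (by linarith)).1
  have hcontg : ∀ u : ℝ → ℂ, Continuous u →
      ContinuousOn (fun t : ℝ => g t * u t) (Ioc (0:ℝ) T₁) := by
    intro u hu
    refine ContinuousOn.mul (ContinuousOn.mul ?_ ?_) hu.continuousOn
    · exact (Complex.continuous_ofReal.comp (hφ.continuous.sub continuous_const)).continuousOn
    · exact contOn_ofReal_rpow α fun t ht => ne_of_gt ht.1
  have hmeasg : ∀ u : ℝ → ℂ, Continuous u →
      AEStronglyMeasurable (fun t : ℝ => g t * u t) (volume.restrict (Ioc (0:ℝ) T₁)) :=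
    fun u hu => (hcontg u hu).aestronglyMeasurable measurableSet_Ioc
  have hnormg : ∀ (z : ℂ) (t : ℝ), t ∈ Ioc (0:ℝ) T₁ →
      ‖g t * Complex.exp (-z * t)‖ = |φ t - 1| * t ^ (-α) * Real.exp (-z.re * t) := by
    intro z t ht
    have h1 : (-z * (t:ℂ)).re = -z.re * t := by simp
    rw [norm_mul, norm_mul, Complex.norm_real, Complex.norm_real, Complex.norm_exp, h1, Real.norm_eq_abs, Real.norm_eq_abs,
      _root_.abs_of_nonneg (Real.rpow_nonneg ht.1.le _)]
  have hexp_le : ∀ (c t : ℝ), t ∈ Ioc (0:ℝ) T₁ → -c * t ≤ |c| * T₁ := by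
    intro c t ht
    calc -c * t ≤ |c| * t := mul_le_mul_of_nonneg_right (neg_le_abs c) ht.1.le
    _ ≤ |c| * T₁ := mul_le_mul_of_nonneg_left ht.2 (abs_nonneg c)
  have Ig : ∀ z : ℂ, IntegrableOn (fun t => g t * Complex.exp (-z * t)) (Ioc 0 T₁) := by
    intro z
    refine Integrable.mono' (Iα.const_mul (M * Real.exp (|z.re| * T₁)))
      (hmeasg _ (cont_exp_factor z)) ?_
    filter_upwards [ae_restrict_mem measurableSet_Ioc] with t ht
    rw [hnormg z t ht]
    have h2 : (0:ℝ) ≤ t ^ (-α) := Real.rpow_nonneg ht.1.le _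
    have h3 : Real.exp (-z.re * t) ≤ Real.exp (|z.re| * T₁) :=
      Real.exp_le_exp.2 (hexp_le _ _ ht)
    calc |φ t - 1| * t ^ (-α) * Real.exp (-z.re * t)
        ≤ M * t ^ (-α) * Real.exp (|z.re| * T₁) := by
          apply mul_le_mul (mul_le_mul (hMb t ht) le_rfl h2 hM0) h3 (Real.exp_nonneg _)
          positivity
      _ = M * Real.exp (|z.re| * T₁) * t ^ (-α) := by ring
  -- H is entire
  have hHdiff : Differentiable ℂ H := by
    intro z₀
    have key := hasDerivAt_integral_of_dominated_loc_of_deriv_le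
      (μ := volume.restrict (Ioc (0:ℝ) T₁))
      (F := fun z t => g t * Complex.exp (-z * t))
      (F' := fun z t => g t * (Complex.exp (-z * t) * (-(t:ℂ))))
      (x₀ := z₀) (bound := fun t => M * Real.exp ((‖z₀‖ + 1) * T₁) * T₁ * t ^ (-α))
      (Metric.ball_mem_nhds z₀ one_pos)
      (Eventually.of_forall fun z => hmeasg _ (cont_exp_factor z)) (Ig z₀)
      (hmeasg _ ((cont_exp_factor z₀).mul Complex.continuous_ofReal.neg))
      ?_ ((Iα.const_mul _)) ?_
    · exact key.2.differentiableAt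
    · filter_upwards [ae_restrict_mem measurableSet_Ioc] with t ht z hz
      have h1 : ‖g t * (Complex.exp (-z * t) * (-(t:ℂ)))‖
          = |φ t - 1| * t ^ (-α) * Real.exp (-z.re * t) * t := by
        have e1 : g t * (Complex.exp (-z * t) * (-(t:ℂ)))
            = (g t * Complex.exp (-z * t)) * (-(t:ℂ)) := by ring
        rw [e1, norm_mul, hnormg z t ht, norm_neg, Complex.norm_real,
          Real.norm_eq_abs, _root_.abs_of_nonneg ht.1.le]
      rw [h1]
      have hzre : |z.re| ≤ ‖z₀‖ + 1 := by
        have h2 : |z.re| ≤ ‖z‖ := Complex.abs_re_le_norm z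
        have h3 : ‖z‖ ≤ ‖z₀‖ + ‖z - z₀‖ := by
          simpa using norm_add_le z₀ (z - z₀)
        have h4 : ‖z - z₀‖ < 1 := by
          rw [← dist_eq_norm]; exact Metric.mem_ball.mp hz
        linarith
      have h5 : Real.exp (-z.re * t) ≤ Real.exp ((‖z₀‖ + 1) * T₁) := by
        apply Real.exp_le_exp.2
        calc -z.re * t ≤ |z.re| * T₁ := hexp_le _ _ ht
        _ ≤ (‖z₀‖ + 1) * T₁ := mul_le_mul_of_nonneg_right hzre hT₁.le
      have h2 : (0:ℝ) ≤ t ^ (-α) := Real.rpow_nonneg ht.1.le _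
      calc |φ t - 1| * t ^ (-α) * Real.exp (-z.re * t) * t
          ≤ M * t ^ (-α) * Real.exp ((‖z₀‖ + 1) * T₁) * T₁ := by
            apply mul_le_mul _ ht.2 ht.1.le (by positivity)
            apply mul_le_mul (mul_le_mul (hMb t ht) le_rfl h2 hM0) h5 (Real.exp_nonneg _)
            positivity
        _ = M * Real.exp ((‖z₀‖ + 1) * T₁) * T₁ * t ^ (-α) := by ring
    · filter_upwards [ae_restrict_mem measurableSet_Ioc] with t _ z _
      have h1 : HasDerivAt (fun z : ℂ => -z * (t:ℂ)) (-(t:ℂ)) z := by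
        simpa using (hasDerivAt_id z).neg.mul_const (t:ℂ)
      exact (h1.cexp).const_mul (g t)
  -- bound on H
  have hHbound : ∀ z : ℂ, ‖H z‖ ≤
      (M * ∫ t in Ioc (0:ℝ) T₁, t ^ (-α)) * (Real.exp (-T₁ * z.re) + 1) := by
    intro z
    calc ‖H z‖ ≤ ∫ t in Ioc (0:ℝ) T₁, ‖g t * Complex.exp (-z * t)‖ :=
          norm_integral_le_integral_norm _
      _ ≤ ∫ t in Ioc (0:ℝ) T₁, (M * (Real.exp (-T₁ * z.re) + 1)) * t ^ (-α) := by
          refine setIntegral_mono_on ((Ig z).norm) (Iα.const_mul _) measurableSet_Ioc ?_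
          intro t ht
          rw [hnormg z t ht]
          have h2 : (0:ℝ) ≤ t ^ (-α) := Real.rpow_nonneg ht.1.le _
          have h3 : Real.exp (-z.re * t) ≤ Real.exp (-T₁ * z.re) + 1 := by
            rcases le_or_gt 0 z.re with hc | hc
            · have : Real.exp (-z.re * t) ≤ 1 := by
                rw [Real.exp_le_one_iff]
                have : 0 ≤ z.re * t := mul_nonneg hc ht.1.le
                linarith
              linarith [Real.exp_nonneg (-T₁ * z.re)]
            · have : Real.exp (-z.re * t) ≤ Real.exp (-T₁ * z.re) := by
                apply Real.exp_le_exp.2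
                have := mul_le_mul_of_nonneg_left ht.2 (by linarith : (0:ℝ) ≤ -z.re)
                nlinarith
              linarith
          calc |φ t - 1| * t ^ (-α) * Real.exp (-z.re * t)
              ≤ M * t ^ (-α) * (Real.exp (-T₁ * z.re) + 1) := by
                apply mul_le_mul (mul_le_mul (hMb t ht) le_rfl h2 hM0) h3 (Real.exp_nonneg _)
                positivity
            _ = M * (Real.exp (-T₁ * z.re) + 1) * t ^ (-α) := by ring
      _ = (M * ∫ t in Ioc (0:ℝ) T₁, t ^ (-α)) * (Real.exp (-T₁ * z.re) + 1) := by
          rw [MeasureTheory.integral_const_mul]; ring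
  -- the Gamma-type integral G
  set G : ℂ → ℂ := fun z => ∫ t in Ioi (0:ℝ), ((t ^ (-α) : ℝ) : ℂ) * Complex.exp (-z * t)
    with hGdef
  have hnormG : ∀ (z : ℂ) (t : ℝ), t ∈ Ioi (0:ℝ) →
      ‖((t ^ (-α) : ℝ) : ℂ) * Complex.exp (-z * t)‖ = t ^ (-α) * Real.exp (-z.re * t) := by
    intro z t ht
    have h1 : (-z * (t:ℂ)).re = -z.re * t := by simp
    rw [norm_mul, Complex.norm_real, Complex.norm_exp, h1,
      Real.norm_eq_abs, _root_.abs_of_nonneg (Real.rpow_nonneg (le_of_lt ht) _)]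
  have hmeasG : ∀ u : ℝ → ℂ, Continuous u →
      AEStronglyMeasurable (fun t : ℝ => ((t ^ (-α) : ℝ) : ℂ) * u t)
        (volume.restrict (Ioi (0:ℝ))) := by
    intro u hu
    exact ((contOn_ofReal_rpow α fun t ht => ne_of_gt ht).mul
      hu.continuousOn).aestronglyMeasurable measurableSet_Ioi
  have hGint : ∀ z : ℂ, 0 < z.re →
      IntegrableOn (fun t => ((t ^ (-α) : ℝ) : ℂ) * Complex.exp (-z * t)) (Ioi 0) := by
    intro z hz
    refine Integrable.mono' (rpow_exp_integrable (s := -α) (b := z.re) (by linarith) hz)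
      (hmeasG _ (cont_exp_factor z)) ?_
    filter_upwards [ae_restrict_mem measurableSet_Ioi] with t ht
    rw [hnormG z t ht]
  -- G is holomorphic on the half-plane
  have hGdiff : DifferentiableOn ℂ G {z : ℂ | 0 < z.re} := by
    intro z₀ hz₀
    have hz₀' : 0 < z₀.re := hz₀
    have key := hasDerivAt_integral_of_dominated_loc_of_deriv_le
      (μ := volume.restrict (Ioi (0:ℝ)))
      (F := fun z t => ((t ^ (-α) : ℝ) : ℂ) * Complex.exp (-z * t))
      (F' := fun z t => ((t ^ (-α) : ℝ) : ℂ) * (Complex.exp (-z * t) * (-(t:ℂ))))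
      (x₀ := z₀) (bound := fun t => t ^ (1 - α) * Real.exp (-(z₀.re / 2) * t))
      (Metric.ball_mem_nhds z₀ (half_pos hz₀'))
      (Eventually.of_forall fun z => hmeasG _ (cont_exp_factor z)) (hGint z₀ hz₀')
      (hmeasG _ ((cont_exp_factor z₀).mul Complex.continuous_ofReal.neg))
      ?_ (rpow_exp_integrable (by linarith) (half_pos hz₀')) ?_
    · exact key.2.differentiableAt.differentiableWithinAt
    · filter_upwards [ae_restrict_mem measurableSet_Ioi] with t ht z hz
      have h1 : ‖((t ^ (-α) : ℝ) : ℂ) * (Complex.exp (-z * t) * (-(t:ℂ)))‖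
          = t ^ (-α) * Real.exp (-z.re * t) * t := by
        have e1 : ((t ^ (-α) : ℝ) : ℂ) * (Complex.exp (-z * t) * (-(t:ℂ)))
            = (((t ^ (-α) : ℝ) : ℂ) * Complex.exp (-z * t)) * (-(t:ℂ)) := by ring
        rw [e1, norm_mul, hnormG z t ht, norm_neg, Complex.norm_real,
          Real.norm_eq_abs, _root_.abs_of_nonneg (le_of_lt ht)]
      rw [h1]
      have hzre : z₀.re / 2 ≤ z.re := by
        have h2 : |z.re - z₀.re| ≤ ‖z - z₀‖ := by
          simpa using Complex.abs_re_le_norm (z - z₀)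
        have h4 : ‖z - z₀‖ < z₀.re / 2 := by
          rw [← dist_eq_norm]; exact Metric.mem_ball.mp hz
        have := abs_le.mp (h2.trans h4.le)
        linarith [this.1]
      have h5 : Real.exp (-z.re * t) ≤ Real.exp (-(z₀.re / 2) * t) := by
        apply Real.exp_le_exp.2
        have : z₀.re / 2 * t ≤ z.re * t := mul_le_mul_of_nonneg_right hzre (le_of_lt ht)
        linarith
      have h6 : t ^ (-α) * t = t ^ (1 - α) := by
        rw [show (1 - α) = -α + 1 by ring, Real.rpow_add ht, Real.rpow_one]
      calc t ^ (-α) * Real.exp (-z.re * t) * t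
          = (t ^ (-α) * t) * Real.exp (-z.re * t) := by ring
        _ = t ^ (1 - α) * Real.exp (-z.re * t) := by rw [h6]
        _ ≤ t ^ (1 - α) * Real.exp (-(z₀.re / 2) * t) :=
            mul_le_mul_of_nonneg_left h5 (Real.rpow_nonneg (le_of_lt ht) _)
    · filter_upwards [ae_restrict_mem measurableSet_Ioi] with t _ z _
      have h1 : HasDerivAt (fun z : ℂ => -z * (t:ℂ)) (-(t:ℂ)) z := by
        simpa using (hasDerivAt_id z).neg.mul_const (t:ℂ)
      exact (h1.cexp).const_mul _
  -- G equals the Gamma formula for positive reals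
  have hGreal : ∀ x : ℝ, 0 < x →
      G (x:ℂ) = (Real.Gamma (1 - α) : ℂ) * (x:ℂ) ^ ((α:ℂ) - 1) := by
    intro x hx
    have ha : 0 < (((1 - α : ℝ) : ℂ)).re := by simp; linarith
    have h1 := integral_cpow_mul_exp_neg_mul_Ioi (a := ((1 - α : ℝ) : ℂ)) ha hx
    have h2 : G (x:ℂ) = ∫ (t : ℝ) in Ioi 0,
        (t:ℂ) ^ (((1 - α : ℝ) : ℂ) - 1) * Complex.exp (-(↑x * ↑t)) := by
      rw [hGdef]
      refine setIntegral_congr_fun measurableSet_Ioi fun t ht => ?_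
      rw [Complex.ofReal_cpow (le_of_lt ht)]
      congr 1
      · congr 1; push_cast; ring
      · congr 1; push_cast; ring
    rw [h2, h1]
    have harg : ((x:ℂ)).arg ≠ Real.pi := by
      rw [Complex.arg_ofReal_of_nonneg hx.le]
      exact fun h => Real.pi_ne_zero h.symm
    rw [one_div, inv_cpow _ _ harg, ← cpow_neg, Complex.Gamma_ofReal]
    rw [show -((1 - α : ℝ) : ℂ) = (α:ℂ) - 1 by push_cast; ring]
    ring
  -- identity theorem: G = Gamma formula on the half-plane
  have hU : IsOpen {z : ℂ | 0 < z.re} := isOpen_lt continuous_const Complex.continuous_re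
  have hP : DifferentiableOn ℂ (fun z : ℂ => (Real.Gamma (1 - α) : ℂ) * z ^ ((α:ℂ) - 1))
      {z : ℂ | 0 < z.re} := by
    intro z hz
    exact ((differentiableAt_id.cpow (differentiableAt_const _)
      (Complex.mem_slitPlane_iff.2 (Or.inl hz))).const_mul _).differentiableWithinAt
  have hfreq : ∃ᶠ z in nhdsWithin (2:ℂ) {(2:ℂ)}ᶜ,
      G z = (Real.Gamma (1 - α) : ℂ) * z ^ ((α:ℂ) - 1) := by
    have hseq : Tendsto (fun n : ℕ => (((2 + 1 / (n + 1) : ℝ)) : ℂ)) atTop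
        (nhdsWithin (2:ℂ) {(2:ℂ)}ᶜ) := by
      apply tendsto_nhdsWithin_of_tendsto_nhds_of_eventually_within
      · have h1 : Tendsto (fun n : ℕ => (2 + 1 / (n + 1) : ℝ)) atTop (nhds 2) := by
          simpa using (tendsto_const_nhds : Tendsto (fun _ : ℕ => (2:ℝ)) atTop (nhds 2)).add (tendsto_one_div_add_atTop_nhds_zero_nat (𝕜 := ℝ))
        have h2 := (Complex.continuous_ofReal.tendsto 2).comp h1
        simpa [Function.comp_def] using h2
      · refine Eventually.of_forall fun n => ?_
        simp only [mem_compl_iff, mem_singleton_iff]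
        intro hcontra
        have hpos : (0:ℝ) < 1 / ((n:ℝ) + 1) := by positivity
        have h2 : (2 + 1 / ((n:ℝ) + 1)) = 2 := by exact_mod_cast hcontra
        linarith
    exact hseq.frequently ((Eventually.of_forall fun n =>
      hGreal _ (by positivity)).frequently)
  have hEq : EqOn G (fun z : ℂ => (Real.Gamma (1 - α) : ℂ) * z ^ ((α:ℂ) - 1))
      {z : ℂ | 0 < z.re} :=
    (hGdiff.analyticOnNhd hU).eqOn_of_preconnected_of_frequently_eq
      (hP.analyticOnNhd hU) (convex_halfSpace_re_gt 0).isPreconnected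
      (by norm_num : (2:ℂ) ∈ {z : ℂ | 0 < z.re}) hfreq
  -- conclude
  refine ⟨H, M * ∫ t in Ioc (0:ℝ) T₁, t ^ (-α), hHdiff, hHbound, ?_⟩
  intro z hz
  -- the correction integrand vanishes beyond T₁
  have hBzero : ∀ t ∈ Ioi T₁, g t * Complex.exp (-z * t) = 0 := by
    intro t ht
    have : φ t = 1 := hone t (le_of_lt ht)
    simp [hgdef, this]
  have hBIoiT₁ : IntegrableOn (fun t => g t * Complex.exp (-z * t)) (Ioi T₁) := by
    refine (integrableOn_zero (μ := volume) (s := Ioi T₁)).congr_fun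
      (fun t ht => (hBzero t ht).symm) measurableSet_Ioi
  have hBint : IntegrableOn (fun t => g t * Complex.exp (-z * t)) (Ioi 0) := by
    rw [← Ioc_union_Ioi_eq_Ioi hT₁.le, integrableOn_union]
    exact ⟨Ig z, hBIoiT₁⟩
  have hsplit : (∫ t in Ioi (0:ℝ), (φ t : ℂ) * ((t ^ (-α) : ℝ) : ℂ) * Complex.exp (-z * t))
      = G z + H z := by
    have hpt : ∀ t ∈ Ioi (0:ℝ),
        (φ t : ℂ) * ((t ^ (-α) : ℝ) : ℂ) * Complex.exp (-z * t)
          = ((t ^ (-α) : ℝ) : ℂ) * Complex.exp (-z * t)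
            + g t * Complex.exp (-z * t) := by
      intro t _
      rw [hgdef]; push_cast; ring
    rw [setIntegral_congr_fun measurableSet_Ioi hpt, integral_add (hGint z hz) hBint]
    congr 1
    rw [← Ioc_union_Ioi_eq_Ioi hT₁.le,
      setIntegral_union Ioc_disjoint_Ioi_same measurableSet_Ioi (Ig z) hBIoiT₁,
      setIntegral_congr_fun measurableSet_Ioi hBzero]
    simp [hHdef]
  rw [hsplit, hEq hz]
end

section
/- Let φ : ℝ → ℝ be smooth, supported in [T₀, ∞) with T₀ > 0, bounded. Then the function F_{φ,1}(z) := ∫_{(0,∞)} φ(t) t^{-1} e^{-zt} dt satisfies |F_{φ,1}(z)| ≤ ‖φ‖_∞ (|log(T₀ Re(z))| + e^{-1}) for all z ∈ ℂ with 0 < T₀ Re(z) ≤ 1. -/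
open MeasureTheory Complex Filter Set

theorem aux_exp_int (x c : ℝ) (hx : 0 < x) :
    ∫ t in Ioi c, Real.exp (-x * t) = Real.exp (-x * c) / x := by
  have key : ∀ t : ℝ, HasDerivAt (fun t : ℝ => -(Real.exp (-x * t) / x))
      (Real.exp (-x * t)) t := by
    intro t
    have h1 : HasDerivAt (fun t : ℝ => -x * t) (-x) t := by
      simpa using (hasDerivAt_id t).const_mul (-x)
    have h2 : HasDerivAt (fun t : ℝ => Real.exp (-x * t)) (Real.exp (-x * t) * (-x)) t :=
      (Real.hasDerivAt_exp (-x * t)).comp t h1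
    have := (h2.div_const x).neg
    have e : -(Real.exp (-x * t) * -x / x) = Real.exp (-x * t) := by
      rw [mul_neg, neg_div, neg_neg, mul_div_assoc, div_self hx.ne', mul_one]
    rw [e] at this
    exact this
  have hlim : Tendsto (fun t : ℝ => -(Real.exp (-x * t) / x)) atTop (nhds 0) := by
    have h : Tendsto (fun t : ℝ => Real.exp (-x * t)) atTop (nhds 0) := by
      have := Real.tendsto_exp_neg_atTop_nhds_zero.comp
        ((tendsto_id.const_mul_atTop hx : Tendsto (fun t : ℝ => x * t) atTop atTop))
      simpa [Function.comp_def, neg_mul] using this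
    simpa using (h.div_const x).neg
  have := integral_Ioi_of_hasDerivAt_of_tendsto' (a := c) (m := 0)
    (fun t _ => key t) (exp_neg_integrableOn_Ioi c hx) hlim
  simpa using this

/-- For smooth `φ` supported in `[T₀, ∞)`, `T₀ > 0`, bounded by `M`, the
function `F_{φ,1}(z) = ∫₀^∞ φ(t) t^{-1} e^{-zt} dt` satisfies
`|F_{φ,1}(z)| ≤ M (|log(T₀ Re z)| + e^{-1})` whenever `0 < T₀ · Re z ≤ 1`. -/
theorem stmt7 (φ : ℝ → ℝ) (T₀ : ℝ) (h0 : 0 < T₀)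
    (hφ : ContDiff ℝ (⊤ : ℕ∞) φ) (hsupp : Function.support φ ⊆ Set.Ici T₀)
    (M : ℝ) (hM : ∀ t, |φ t| ≤ M) :
    ∀ z : ℂ, 0 < z.re → T₀ * z.re ≤ 1 →
      ‖∫ t in Set.Ioi (0 : ℝ), (φ t : ℂ) * ((t⁻¹ : ℝ) : ℂ) *
          Complex.exp (-z * t)‖ ≤
        M * (|Real.log (T₀ * z.re)| + Real.exp (-1)) := by
  intro z hz hle
  set x := z.re with hxdef
  have hx : 0 < x := hz
  have hM0 : 0 ≤ M := (abs_nonneg _).trans (hM 0)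
  set c : ℝ := x⁻¹ with hcdef
  have hc : 0 < c := inv_pos.2 hx
  have hTc : T₀ ≤ c := by
    rw [hcdef, ← one_div, le_div_iff₀ hx]; exact hle
  set F : ℝ → ℝ := fun t => M * (t⁻¹ * Real.exp (-x * t)) with hFdef
  set g : ℝ → ℝ := Set.indicator (Ici T₀) F with hgdef
  -- integrability of F on Ici T₀ / Ioi T₀
  have hFmeas : ∀ s : Set ℝ, s ⊆ Ioi 0 → MeasurableSet s → AEStronglyMeasurable F (volume.restrict s) := by
    intro s hs hms
    apply ContinuousOn.aestronglyMeasurable _ hms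
    apply ContinuousOn.mul continuousOn_const
    apply ContinuousOn.mul
    · exact continuousOn_inv₀.mono (fun t ht => ne_of_gt (hs ht))
    · exact (Real.continuous_exp.comp (continuous_const.mul continuous_id)).continuousOn
  have hIciT : Ici T₀ ⊆ Ioi 0 := fun t ht => lt_of_lt_of_le h0 ht
  have hFint : ∀ a : ℝ, 0 < a → IntegrableOn F (Ioi a) := by
    intro a ha
    apply Integrable.mono' ((exp_neg_integrableOn_Ioi a hx).const_mul (M * a⁻¹))
      (hFmeas _ (fun t ht => lt_trans ha ht) measurableSet_Ioi)
    filter_upwards [ae_restrict_mem measurableSet_Ioi] with t ht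
    have ht0 : 0 < t := lt_trans ha ht
    have : t⁻¹ ≤ a⁻¹ := inv_anti₀ ha (le_of_lt ht)
    rw [Real.norm_eq_abs, _root_.abs_of_nonneg (mul_nonneg hM0 (mul_nonneg (inv_nonneg.2 ht0.le) (Real.exp_pos _).le))]
    calc M * (t⁻¹ * Real.exp (-x * t)) ≤ M * (a⁻¹ * Real.exp (-x * t)) := by
          apply mul_le_mul_of_nonneg_left _ hM0
          exact mul_le_mul_of_nonneg_right this (Real.exp_pos _).le
      _ = M * a⁻¹ * Real.exp (-x * t) := by ring
  have hFintIci : IntegrableOn F (Ici T₀) := by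
    rw [integrableOn_Ici_iff_integrableOn_Ioi]
    exact hFint T₀ h0
  have hgi : IntegrableOn g (Ioi 0) := by
    have : Integrable g := by
      rw [hgdef, integrable_indicator_iff measurableSet_Ici]
      exact hFintIci
    exact this.integrableOn
  -- norm bound
  have hbound : ∀ᵐ t ∂(volume.restrict (Ioi (0:ℝ))),
      ‖(φ t : ℂ) * ((t⁻¹ : ℝ) : ℂ) * Complex.exp (-z * t)‖ ≤ g t := by
    filter_upwards [ae_restrict_mem measurableSet_Ioi] with t ht
    have ht0 : (0:ℝ) < t := ht
    by_cases hT : T₀ ≤ t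
    · have hgt : g t = F t := Set.indicator_of_mem hT F
      rw [hgt]
      have hre : (-z * (t:ℂ)).re = -x * t := by
        simp [Complex.mul_re]
        exact Or.inl rfl
      rw [norm_mul, norm_mul, Complex.norm_exp, hre,
        Complex.norm_real, Complex.norm_real,
        Real.norm_eq_abs, Real.norm_eq_abs, _root_.abs_of_nonneg (inv_nonneg.2 ht0.le)]
      calc |φ t| * t⁻¹ * Real.exp (-x * t) ≤ M * t⁻¹ * Real.exp (-x * t) := by
            apply mul_le_mul_of_nonneg_right _ (Real.exp_pos _).le
            exact mul_le_mul_of_nonneg_right (hM t) (inv_nonneg.2 ht0.le)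
        _ = F t := by rw [hFdef]; ring
    · have hφ0 : φ t = 0 := by
        by_contra h
        exact hT (hsupp h)
      have hgt : g t = 0 := Set.indicator_of_notMem (by simpa using hT) F
      simp [hφ0, hgt]
  have step1 : ‖∫ t in Set.Ioi (0 : ℝ), (φ t : ℂ) * ((t⁻¹ : ℝ) : ℂ) * Complex.exp (-z * t)‖
      ≤ ∫ t in Ioi (0:ℝ), g t := norm_integral_le_of_norm_le hgi hbound
  -- compute/bound the majorant integral
  have hsplit : ∫ t in Ioi (0:ℝ), g t = (∫ t in Ioc T₀ c, F t) + ∫ t in Ioi c, F t := by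
    rw [hgdef, setIntegral_indicator measurableSet_Ici,
      Set.inter_eq_self_of_subset_right hIciT, integral_Ici_eq_integral_Ioi,
      ← Set.Ioc_union_Ioi_eq_Ioi hTc]
    exact setIntegral_union (Set.Ioc_disjoint_Ioi le_rfl) measurableSet_Ioi
      ((hFint T₀ h0).mono_set Set.Ioc_subset_Ioi_self) (hFint c hc)
  have hpart1 : (∫ t in Ioc T₀ c, F t) ≤ M * |Real.log (T₀ * x)| := by
    have hmono : ∫ t in Ioc T₀ c, F t ≤ ∫ t in Ioc T₀ c, M * t⁻¹ := by
      apply setIntegral_mono_on ((hFint T₀ h0).mono_set Set.Ioc_subset_Ioi_self)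
      · have hcont : ContinuousOn (fun t : ℝ => t⁻¹) (Icc T₀ c) :=
          continuousOn_inv₀.mono (fun t ht => ne_of_gt (lt_of_lt_of_le h0 ht.1))
        exact ((ContinuousOn.integrableOn_compact isCompact_Icc hcont).mono_set
          Set.Ioc_subset_Icc_self).const_mul M
      · exact measurableSet_Ioc
      · intro t ht
        have ht0 : 0 < t := lt_of_lt_of_le h0 ht.1.le
        rw [hFdef]
        have : Real.exp (-x * t) ≤ 1 := Real.exp_le_one_iff.2 (by nlinarith)
        calc M * (t⁻¹ * Real.exp (-x * t)) ≤ M * (t⁻¹ * 1) := by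
              apply mul_le_mul_of_nonneg_left _ hM0
              exact mul_le_mul_of_nonneg_left this (inv_nonneg.2 ht0.le)
          _ = M * t⁻¹ := by ring
    have hval : ∫ t in Ioc T₀ c, M * t⁻¹ = M * |Real.log (T₀ * x)| := by
      rw [← intervalIntegral.integral_of_le hTc, intervalIntegral.integral_const_mul,
        integral_inv_of_pos h0 hc]
      congr 1
      have h1 : Real.log (c / T₀) = -Real.log (T₀ * x) := by
        rw [hcdef, Real.log_div (inv_ne_zero hx.ne') h0.ne', Real.log_inv,
          Real.log_mul h0.ne' hx.ne']
        ring
      have h2 : Real.log (T₀ * x) ≤ 0 :=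
        Real.log_nonpos (by positivity) hle
      rw [h1, _root_.abs_of_nonpos h2]
    linarith [hmono, hval.le, hval.ge]
  have hpart2 : (∫ t in Ioi c, F t) ≤ M * Real.exp (-1) := by
    have hmono : ∫ t in Ioi c, F t ≤ ∫ t in Ioi c, M * x * Real.exp (-x * t) := by
      apply setIntegral_mono_on (hFint c hc)
        ((exp_neg_integrableOn_Ioi c hx).const_mul (M * x)) measurableSet_Ioi
      intro t ht
      have ht0 : 0 < t := lt_trans hc ht
      have hinv : t⁻¹ ≤ x := by
        rw [← inv_inv x]
        exact inv_anti₀ hc ht.le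
      rw [hFdef]
      calc M * (t⁻¹ * Real.exp (-x * t)) ≤ M * (x * Real.exp (-x * t)) := by
            apply mul_le_mul_of_nonneg_left _ hM0
            exact mul_le_mul_of_nonneg_right hinv (Real.exp_pos _).le
        _ = M * x * Real.exp (-x * t) := by ring
    have hval : ∫ t in Ioi c, M * x * Real.exp (-x * t) = M * Real.exp (-1) := by
      rw [integral_const_mul, aux_exp_int x c hx]
      have : -x * c = -1 := by
        rw [hcdef]; field_simp
      rw [this]
      field_simp
    linarith [hmono, hval.le]
  calc ‖∫ t in Set.Ioi (0 : ℝ), (φ t : ℂ) * ((t⁻¹ : ℝ) : ℂ) * Complex.exp (-z * t)‖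
      ≤ ∫ t in Ioi (0:ℝ), g t := step1
    _ = (∫ t in Ioc T₀ c, F t) + ∫ t in Ioi c, F t := hsplit
    _ ≤ M * |Real.log (T₀ * x)| + M * Real.exp (-1) := add_le_add hpart1 hpart2
    _ = M * (|Real.log (T₀ * x)| + Real.exp (-1)) := by ring
end

section
/- Let ω := ι_V(dx₁ ∧ ⋯ ∧ dx_d) where V = θ·∂_x is the geodesic vector field on S𝕋^d = 𝕋^d × S^{d−1} and ι_V denotes interior multiplication. Then the pullback of ω under the geodesic flow e^{tV}(x,θ) = (x + tθ, θ) is a polynomial of degree d−1 in t with coefficients in the smooth (d−1)-forms on S𝕋^d, and its leading coefficient equals the pullback to S𝕋^d of the standard volume form Vol_{S^{d−1}}(θ, dθ) = Σ_{p=1}^d (−1)^{p+1} θ_p dθ₁ ∧ ⋯ ∧ (dθ_p omitted) ∧ ⋯ ∧ dθ_d on the sphere. -/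
/-- Write `d = n + 1`. The `(d-1)`-form `ω = ι_V(dx₁ ∧ ⋯ ∧ dx_d)` on
`S𝕋^d`, evaluated at a point with direction `θ` on tangent vectors
`v i = (v i .1, v i .2)` (horizontal and spherical components), is
`det(θ, (v 1).1, …, (v n).1)`. Its pullback under the geodesic flow
`e^{tV}(x, θ) = (x + tθ, θ)` is `det(θ, (v i).1 + t (v i).2, …)`, which is a polynomial
of degree `d - 1 = n` in `t` whose leading coefficient is
`det(θ, (v 1).2, …, (v n).2)`, i.e. the pullback of the spherical volume form
`Vol_{S^{d-1}}(θ, dθ) = ι_{θ·∂_θ}(dθ₁ ∧ ⋯ ∧ dθ_d)`. -/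
theorem stmt10 (n : ℕ) (θ : Fin (n + 1) → ℝ)
    (v : Fin n → (Fin (n + 1) → ℝ) × (Fin (n + 1) → ℝ)) :
    ∃ c : ℕ → ℝ,
      (∀ t : ℝ,
        Matrix.det (Matrix.of (Fin.cons θ (fun i j => (v i).1 j + t * (v i).2 j))) =
          ∑ k ∈ Finset.range (n + 1), c k * t ^ k) ∧
      c n = Matrix.det (Matrix.of (Fin.cons θ (fun i => (v i).2))) := by
  classical
  set a : Fin n → (Fin (n + 1) → ℝ) := fun i => (v i).1 with ha
  set b : Fin n → (Fin (n + 1) → ℝ) := fun i => (v i).2 with hb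
  have hcu : ∀ (inst : DecidableEq (Fin n)) (w : Fin n → Fin (n + 1) → ℝ) (i : Fin n)
      (z : Fin (n + 1) → ℝ),
      Fin.cons θ (Function.update w i z)
        = Function.update (Fin.cons θ w : Fin (n + 1) → Fin (n + 1) → ℝ) i.succ z := by
    intro inst w i z
    funext j
    induction j using Fin.cases with
    | zero =>
        rw [Function.update_of_ne (Fin.succ_ne_zero i).symm]
        simp
    | succ j =>
        by_cases h : j = i
        · subst h; simp
        · rw [Function.update_of_ne (fun hh => h (Fin.succ_injective _ hh)),
            Fin.cons_succ, Fin.cons_succ, Function.update_of_ne h]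
  -- the multilinear map `w ↦ det (θ, w)`
  let f : MultilinearMap ℝ (fun _ : Fin n => (Fin (n + 1) → ℝ)) ℝ :=
    { toFun := fun w => Matrix.det (Matrix.of (Fin.cons θ w))
      map_update_add' := by
        intro inst w i x y
        beta_reduce
        rw [hcu inst w i (x + y), hcu inst w i x, hcu inst w i y]
        exact (Matrix.detRowAlternating (R := ℝ) (n := Fin (n + 1))).map_update_add
          (Matrix.of (Fin.cons θ w)) i.succ x y
      map_update_smul' := by
        intro inst w i r x
        beta_reduce
        rw [hcu inst w i (r • x), hcu inst w i x]
        exact (Matrix.detRowAlternating (R := ℝ) (n := Fin (n + 1))).map_update_smul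
          (Matrix.of (Fin.cons θ w)) i.succ r x }
  have hf : ∀ w, f w = Matrix.det (Matrix.of (Fin.cons θ w)) := fun _ => rfl
  refine ⟨fun k => ∑ s ∈ Finset.powersetCard k (Finset.univ : Finset (Fin n)),
      f (s.piecewise b a), ?_, ?_⟩
  · intro t
    have h0 : (fun i j => (v i).1 j + t * (v i).2 j) = (fun i => t • b i) + a := by
      funext i j
      simp [ha, hb, add_comm, mul_comm]
    have h1 := f.map_add_univ (fun i => t • b i) a
    have h2 : ∀ s : Finset (Fin n),
        f (s.piecewise (fun i => t • b i) a) = t ^ s.card * f (s.piecewise b a) := by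
      intro s
      have hpw : s.piecewise (fun i => t • b i) a
          = s.piecewise (fun i => t • (s.piecewise b a) i) (s.piecewise b a) := by
        funext i
        by_cases h : i ∈ s <;> simp [Finset.piecewise, h]
      rw [hpw, f.map_piecewise_smul]
      simp [smul_eq_mul]
    calc Matrix.det (Matrix.of (Fin.cons θ (fun i j => (v i).1 j + t * (v i).2 j)))
        = f ((fun i => t • b i) + a) := by rw [h0, hf]
      _ = ∑ s : Finset (Fin n), f (s.piecewise (fun i => t • b i) a) := h1
      _ = ∑ s : Finset (Fin n), t ^ s.card * f (s.piecewise b a) := by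
          exact Finset.sum_congr rfl fun s _ => h2 s
      _ = ∑ s ∈ (Finset.univ : Finset (Fin n)).powerset,
            t ^ s.card * f (s.piecewise b a) := by rw [Finset.powerset_univ]
      _ = ∑ k ∈ Finset.range ((Finset.univ : Finset (Fin n)).card + 1),
            ∑ s ∈ Finset.powersetCard k (Finset.univ : Finset (Fin n)),
              t ^ s.card * f (s.piecewise b a) :=
          Finset.sum_powerset _ _
      _ = ∑ k ∈ Finset.range (n + 1),
            (∑ s ∈ Finset.powersetCard k (Finset.univ : Finset (Fin n)),
              f (s.piecewise b a)) * t ^ k := by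
          rw [Finset.card_univ, Fintype.card_fin]
          refine Finset.sum_congr rfl fun k _ => ?_
          rw [Finset.sum_mul]
          refine Finset.sum_congr rfl fun s hs => ?_
          rw [(Finset.mem_powersetCard.1 hs).2, mul_comm]
  · have hps : Finset.powersetCard n (Finset.univ : Finset (Fin n)) = {Finset.univ} := by
      simpa using Finset.powersetCard_self (Finset.univ : Finset (Fin n))
    simp only [hps, Finset.sum_singleton, Finset.piecewise_univ]
    rw [hf]
end
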